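/- arXiv:2506.20390 — 3 statements merged into one kernel-verified Lean document; each statement's English description precedes it below -/
import Mathlib

section
/- Let d ≥ 2, 0 < α ≤ 1, and q > 0. There is a constant C₀ = C₀(α) such that the following necessity holds: if there exists a constant C such that for every collection 𝓘 of pairwise disjoint unit intervals in ℝ that is α-sparse with constant C₀, with Γ = ∪_{I∈𝓘} I, and for all f, g ∈ L²(ℝ^d) supported in 𝔸₁ (with no angular separation assumption), one has (∫_Γ ∫_{ℝ^d} |ℛ*f(x,t) · ℛ*g(x,t)|^{q/2} dx dt)^{2/q} ≤ C ‖f‖_{L²} ‖g‖_{L²}, then necessarily q ≥ 2(d−1+2α)/(d−1). -/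
open MeasureTheory Metric Set ENNReal

noncomputable section

abbrev Ed (d : ℕ) : Type := EuclideanSpace ℝ (Fin d)

/-- Minimal number of open intervals of length `δ` needed to cover `E`. -/
def covN (E : Set ℝ) (δ : ℝ) : ℕ :=
  sInf {n : ℕ | ∃ S : Finset ℝ, S.card = n ∧ E ⊆ ⋃ c ∈ S, Set.Ioo c (c + δ)}

/-- The Assouad characteristic `𝒜_α(E; δ)` (supremum over subintervals `I ⊆ [1,2]`
with `δ ≤ |I| ≤ 1` of `(δ/|I|)^α 𝒩(E ∩ I, δ)`). -/
def assouadChar (α : ℝ) (E : Set ℝ) (δ : ℝ) : ℝ :=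
  sSup {r : ℝ | ∃ a b : ℝ, 1 ≤ a ∧ b ≤ 2 ∧ δ ≤ b - a ∧
    r = (δ / (b - a)) ^ α * (covN (E ∩ Set.Icc a b) δ : ℝ)}

/-- Fourier transform: `f̂(ξ) = ∫ e^{-i x·ξ} f(x) dx`. -/
def ftr {d : ℕ} (f : Ed d → ℂ) (ξ : Ed d) : ℂ :=
  ∫ x : Ed d, Complex.exp (-Complex.I * ((inner ℝ x ξ : ℝ) : ℂ)) * f x

/-- Half-wave propagator `e^{ε i t √(−Δ)} f (x) = (2π)^{-d} ∫ e^{i(x·ξ + ε t |ξ|)} f̂(ξ) dξ`. -/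
def waveProp {d : ℕ} (ε t : ℝ) (f : Ed d → ℂ) (x : Ed d) : ℂ :=
  (((2 * Real.pi) ^ d : ℝ) : ℂ)⁻¹ *
    ∫ ξ : Ed d, Complex.exp (Complex.I * (((inner ℝ x ξ : ℝ) : ℂ) + ((ε * t * ‖ξ‖ : ℝ) : ℂ))) *
      ftr f ξ

/-- The annulus `𝔸_N`. -/
def ann (d : ℕ) (N : ℝ) : Set (Ed d) := {ξ | N / 2 ≤ ‖ξ‖ ∧ ‖ξ‖ ≤ 2 * N}

/-- The sector `{ξ : ξ/‖ξ‖ ∈ Θ, N/2 ≤ ‖ξ‖ ≤ 2N}`. -/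
def sector (d : ℕ) (Θ : Set (Ed d)) (N : ℝ) : Set (Ed d) :=
  {ξ | ‖ξ‖⁻¹ • ξ ∈ Θ ∧ N / 2 ≤ ‖ξ‖ ∧ ‖ξ‖ ≤ 2 * N}

/-- A spherical cap. -/
def IsCap {d : ℕ} (Θ : Set (Ed d)) : Prop :=
  ∃ (z : Ed d) (r : ℝ), Θ = Metric.sphere (0 : Ed d) 1 ∩ Metric.closedBall z r

/-- Mixed norm `‖F‖_{L^r(ℝ^d × 𝓔)}` over a finite time set `𝓔`. -/
def mixNormP {d : ℕ} (𝓔 : Finset ℝ) (r : ℝ≥0∞) (F : ℝ → Ed d → ℂ) : ℝ≥0∞ :=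
  if r = ∞ then 𝓔.sup fun t => eLpNorm (F t) ∞ volume
  else (∑ t ∈ 𝓔, eLpNorm (F t) r volume ^ r.toReal) ^ (1 / r.toReal)

/-- Normalized surface measure on the unit sphere `S^{d-1} ⊆ ℝ^d`. -/
def sphMeasure (d : ℕ) : Measure (Metric.sphere (0 : Ed d) 1) :=
  ((volume : Measure (Ed d)).toSphere Set.univ)⁻¹ • (volume : Measure (Ed d)).toSphere

/-- Spherical average `A_t f(x) = ∫_{S^{d-1}} f(x - t y) dσ(y)`. -/
def sphereAvg (d : ℕ) (t : ℝ) (f : Ed d → ℂ) (x : Ed d) : ℂ :=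
  ∫ y : Metric.sphere (0 : Ed d) 1, f (x - t • (y : Ed d)) ∂(sphMeasure d)

/-- Maximal function `M_E f(x) = sup_{t ∈ E} |A_t f(x)|`. -/
def maxFn (d : ℕ) (E : Set ℝ) (f : Ed d → ℂ) (x : Ed d) : ℝ :=
  ⨆ t ∈ E, ‖sphereAvg d t f x‖

/-- Adjoint restriction (extension) operator for the cone. -/
def extOp {d : ℕ} (g : Ed d → ℂ) (x : Ed d) (t : ℝ) : ℂ :=
  ∫ ξ : Ed d, Complex.exp (Complex.I * (((inner ℝ x ξ : ℝ) : ℂ) + ((t * ‖ξ‖ : ℝ) : ℂ))) * g ξ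

/-- An `α`-sparse (with constant `C₀`) family of pairwise disjoint unit intervals,
encoded by the set `T` of left endpoints. -/
def SparseFamily (α C₀ : ℝ) (T : Set ℝ) : Prop :=
  (∀ s ∈ T, ∀ s' ∈ T, s ≠ s' → 1 ≤ |s - s'|) ∧
  ∀ t r : ℝ, 1 ≤ r →
    {s ∈ T | (Set.Ico s (s + 1) ∩ Set.Ioo t (t + r)).Nonempty}.Finite ∧
    ({s ∈ T | (Set.Ico s (s + 1) ∩ Set.Ioo t (t + r)).Nonempty}).ncard ≤ C₀ * r ^ α

/-- The integer vector `k ∈ ℤ^d` as an element of `ℝ^d`. -/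
def intVec {d : ℕ} (k : Fin d → ℤ) : Ed d :=
  (WithLp.equiv 2 ((i : Fin d) → ℝ)).symm fun i => (k i : ℝ)

/-- `φ̃_θ(η) = θ^{-2}(√(1+θ²|η|²) − 1)` for `θ > 0`, and `φ̃₀(η) = |η|²/2`. -/
def phiT (θ : ℝ) {m : ℕ} (η : Ed m) : ℝ :=
  if θ = 0 then ‖η‖ ^ 2 / 2 else (Real.sqrt (1 + θ ^ 2 * ‖η‖ ^ 2) - 1) / θ ^ 2

/-- The operator `𝒯_θ h(x,t) = ∫ e^{i(x·ξ + t ξ₁ φ̃_θ(ξ'/ξ₁))} h(ξ) dξ`. -/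
def TOp (θ : ℝ) {m : ℕ} (h : ℝ × Ed m → ℂ) (x : ℝ × Ed m) (t : ℝ) : ℂ :=
  ∫ ξ : ℝ × Ed m, Complex.exp (Complex.I *
    ((x.1 * ξ.1 + (inner ℝ x.2 ξ.2 : ℝ) + t * ξ.1 * phiT θ (ξ.1⁻¹ • ξ.2) : ℝ) : ℂ)) * h ξ

/- ===== auxiliary material for stmt11 ===== -/

section Stmt11Aux

private lemma aux_prod_ite {d : ℕ} [NeZero d] (A B : ℝ) :
    ∏ i : Fin d, (if i = 0 then A else B) = A * B ^ (d - 1) := by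
  rw [Finset.prod_eq_mul_prod_sdiff_singleton_of_mem (Finset.mem_univ (0 : Fin d))]
  rw [if_pos rfl]
  congr 1
  rw [Finset.prod_congr rfl (fun i hi => if_neg (by
        simp only [Finset.mem_sdiff, Finset.mem_singleton] at hi; exact hi.2)),
    Finset.prod_const]
  congr 1
  rw [Finset.card_sdiff_of_subset (Finset.subset_univ _), Finset.card_singleton, Finset.card_univ,
    Fintype.card_fin]

private lemma aux_rpow_superadd {p : ℝ} (hp : 1 ≤ p) {x : ℝ} (hx : 0 ≤ x) :
    x ^ p + 1 ≤ (x + 1) ^ p := by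
  have h := NNReal.add_rpow_le_rpow_add x.toNNReal 1 hp
  have h2 := NNReal.coe_le_coe.mpr h
  push_cast at h2
  rw [Real.one_rpow] at h2
  rwa [Real.coe_toNNReal x hx] at h2

private lemma aux_rpow_subadd {p : ℝ} (hp0 : 0 < p) (hp1 : p ≤ 1) {x y : ℝ}
    (hx : 0 ≤ x) (hy : 0 ≤ y) : (x + y) ^ p ≤ x ^ p + y ^ p := by
  have h := NNReal.rpow_add_rpow_le x.toNNReal y.toNNReal hp0 hp1
  norm_num at h
  have h2 := NNReal.rpow_le_rpow h hp0.le
  rw [← NNReal.rpow_mul, inv_mul_cancel₀ hp0.ne', NNReal.rpow_one] at h2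
  have h3 := NNReal.coe_le_coe.mpr h2
  push_cast at h3
  rwa [Real.coe_toNNReal x hx, Real.coe_toNNReal y hy] at h3

/-- the sparse sequence of times -/
private def gfun (α : ℝ) (n : ℕ) : ℝ := (n : ℝ) ^ α⁻¹

private lemma gfun_nonneg (α : ℝ) (n : ℕ) : 0 ≤ gfun α n :=
  Real.rpow_nonneg (Nat.cast_nonneg n) _

private lemma aux_hp {α : ℝ} (hα0 : 0 < α) (hα1 : α ≤ 1) : (1 : ℝ) ≤ α⁻¹ := by
  have h := one_div_le_one_div_of_le hα0 hα1
  simpa using h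

private lemma gfun_mono {α : ℝ} (hα0 : 0 < α) {m n : ℕ} (h : m < n) :
    gfun α m < gfun α n :=
  Real.rpow_lt_rpow (Nat.cast_nonneg m) (by exact_mod_cast h) (by positivity)

private lemma aux_gstep {α : ℝ} (hα0 : 0 < α) (hα1 : α ≤ 1) {m n : ℕ} (h : m < n) :
    gfun α m + 1 ≤ gfun α n := by
  have hp := aux_hp hα0 hα1
  have h1 : gfun α m + 1 ≤ gfun α (m + 1) := by
    have h2 := aux_rpow_superadd hp (Nat.cast_nonneg m) (x := (m : ℝ))
    have h3 : ((m : ℝ) + 1) = ((m + 1 : ℕ) : ℝ) := by push_cast; ring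
    rw [h3] at h2
    simpa [gfun] using h2
  rcases eq_or_lt_of_le (Nat.succ_le_of_lt h) with h2 | h2
  · rw [← h2]; exact h1
  · linarith [gfun_mono hα0 h2]

private lemma gfun_ge_self {α : ℝ} (hα0 : 0 < α) (hα1 : α ≤ 1) (n : ℕ) :
    (n : ℝ) ≤ gfun α n := by
  rcases Nat.eq_zero_or_pos n with rfl | hn0
  · simp [gfun, Real.zero_rpow (ne_of_gt (by positivity : (0:ℝ) < α⁻¹))]
  · calc (n : ℝ) = (n : ℝ) ^ (1 : ℝ) := (Real.rpow_one _).symm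
      _ ≤ (n : ℝ) ^ α⁻¹ := Real.rpow_le_rpow_of_exponent_le
        (by exact_mod_cast hn0) (aux_hp hα0 hα1)

private lemma aux_sparse {α : ℝ} (hα0 : 0 < α) (hα1 : α ≤ 1) :
    SparseFamily α 4 (Set.range (gfun α)) := by
  constructor
  · rintro s ⟨m, rfl⟩ s' ⟨n, rfl⟩ hne
    have hmn : m ≠ n := by rintro rfl; exact hne rfl
    rcases hmn.lt_or_gt with h | h
    · rw [abs_sub_comm, le_abs]; left; linarith [aux_gstep hα0 hα1 h]
    · rw [le_abs]; left; linarith [aux_gstep hα0 hα1 h]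
  · intro t r hr
    set A : Set ℕ := {n | t - 1 < gfun α n ∧ gfun α n < t + r} with hA
    have hSA : {s ∈ Set.range (gfun α) |
        (Set.Ico s (s + 1) ∩ Set.Ioo t (t + r)).Nonempty} ⊆ gfun α '' A := by
      rintro s ⟨⟨n, rfl⟩, z, ⟨⟨hz1, hz2⟩, ⟨hz3, hz4⟩⟩⟩
      exact ⟨n, ⟨by linarith, by linarith⟩, rfl⟩
    have hAfin : A.Finite := by
      apply Set.Finite.subset (Set.finite_Iio (⌈t + r⌉₊ : ℕ))
      intro n hn
      exact Set.mem_Iio.mpr (Nat.lt_ceil.mpr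
        (lt_of_le_of_lt (gfun_ge_self hα0 hα1 n) hn.2))
    have hSfin := (hAfin.image (gfun α)).subset hSA
    refine ⟨hSfin, ?_⟩
    have hcard : (({s ∈ Set.range (gfun α) |
        (Set.Ico s (s + 1) ∩ Set.Ioo t (t + r)).Nonempty}).ncard : ℝ) ≤ (A.ncard : ℝ) := by
      exact_mod_cast le_trans (Set.ncard_le_ncard hSA (hAfin.image _))
        (Set.ncard_image_le hAfin)
    have hr0 : (0 : ℝ) < r := lt_of_lt_of_le one_pos hr
    have hrα1 : (1 : ℝ) ≤ r ^ α := by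
      calc (1 : ℝ) = 1 ^ α := (Real.one_rpow α).symm
        _ ≤ r ^ α := Real.rpow_le_rpow zero_le_one hr hα0.le
    have h4 : (r + 1) ^ α ≤ r ^ α + 1 := by
      have h := aux_rpow_subadd hα0 hα1 hr0.le zero_le_one
      simpa using h
    have hbound : (A.ncard : ℝ) ≤ 4 * r ^ α := by
      by_cases hv : t + r ≤ 0
      · have hempty : A = ∅ := by
          ext n
          simp only [hA, Set.mem_setOf_eq, Set.mem_empty_iff_false, iff_false, not_and]
          intro _
          have := gfun_nonneg α n
          intro h2; linarith
        rw [hempty]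
        simp only [Set.ncard_empty, Nat.cast_zero]
        positivity
      push_neg at hv
      have hnlt : ∀ n ∈ A, (n : ℝ) < (t + r) ^ α := by
        intro n hn
        have h2 : (gfun α n) ^ α < (t + r) ^ α :=
          Real.rpow_lt_rpow (gfun_nonneg α n) hn.2 hα0
        rwa [gfun, Real.rpow_inv_rpow (Nat.cast_nonneg n) hα0.ne'] at h2
      by_cases hu : t - 1 ≤ 0
      · have hsub : A ⊆ ↑(Finset.range ⌈(t + r) ^ α⌉₊) := by
          intro n hn
          simp only [Finset.coe_range, Set.mem_Iio]
          exact Nat.lt_ceil.mpr (hnlt n hn)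
        have h1 : (A.ncard : ℝ) ≤ (⌈(t + r) ^ α⌉₊ : ℝ) := by
          have := Set.ncard_le_ncard hsub (Finset.range _).finite_toSet
          rw [Set.ncard_coe_finset, Finset.card_range] at this
          exact_mod_cast this
        have h2 : (⌈(t + r) ^ α⌉₊ : ℝ) < (t + r) ^ α + 1 :=
          Nat.ceil_lt_add_one (by positivity)
        have h3 : (t + r) ^ α ≤ (r + 1) ^ α :=
          Real.rpow_le_rpow (by positivity) (by linarith) hα0.le
        linarith
      · push_neg at hu
        set a := ⌊(t - 1) ^ α⌋₊ with ha'
        set b := ⌈(t + r) ^ α⌉₊ with hb'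
        have hsub : A ⊆ ↑(Finset.Ioo a b) := by
          intro n hn
          simp only [Finset.coe_Ioo, Set.mem_Ioo]
          constructor
          · have h2 : (t - 1) ^ α < (gfun α n) ^ α :=
              Real.rpow_lt_rpow hu.le hn.1 hα0
            rw [gfun, Real.rpow_inv_rpow (Nat.cast_nonneg n) hα0.ne'] at h2
            exact (Nat.floor_lt (by positivity)).mpr h2
          · exact Nat.lt_ceil.mpr (hnlt n hn)
        have h1 : (A.ncard : ℝ) ≤ ((b - a - 1 : ℕ) : ℝ) := by
          have := Set.ncard_le_ncard hsub (Finset.Ioo a b).finite_toSet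
          rw [Set.ncard_coe_finset, Nat.card_Ioo] at this
          exact_mod_cast this
        have hb2 : (b : ℝ) < (t + r) ^ α + 1 := Nat.ceil_lt_add_one (by positivity)
        have ha2 : (t - 1) ^ α - 1 < (a : ℝ) := Nat.sub_one_lt_floor _
        have hvu : (t + r) ^ α ≤ (t - 1) ^ α + (r + 1) ^ α := by
          have h := aux_rpow_subadd hα0 hα1 hu.le
            (by linarith : (0 : ℝ) ≤ r + 1) (x := t - 1) (y := r + 1)
          have he : t - 1 + (r + 1) = t + r := by ring
          rwa [he] at h
        rcases le_or_gt b (a + 1) with hle | hlt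
        · have hz : b - a - 1 = 0 := by omega
          rw [hz] at h1
          have h0 : (A.ncard : ℝ) ≤ 0 := by exact_mod_cast h1
          linarith
        · have hcast : ((b - a - 1 : ℕ) : ℝ) = (b : ℝ) - a - 1 := by
            have h5 : a + 1 ≤ b := by omega
            push_cast [Nat.cast_sub (by omega : a + 1 ≤ b)]
            have : b - a - 1 = b - (a + 1) := by omega
            rw [this, Nat.cast_sub h5]
            push_cast; ring
          rw [hcast] at h1
          linarith
    linarith

/-- a coordinate box in `Ed d` -/
private def kBox (d : ℕ) (lo hi : Fin d → ℝ) : Set (Ed d) :=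
  {ξ | ∀ i, ξ i ∈ Set.Icc (lo i) (hi i)}

private lemma kBox_eq (d : ℕ) (lo hi : Fin d → ℝ) :
    kBox d lo hi = (MeasurableEquiv.toLp 2 (Fin d → ℝ)).symm ⁻¹'
      (Set.univ.pi fun i => Set.Icc (lo i) (hi i)) := by
  ext ξ
  simp [kBox, MeasurableEquiv.coe_toLp_symm, Set.mem_pi, Pi.le_def, forall_and,]

private lemma kBox_measurable (d : ℕ) (lo hi : Fin d → ℝ) :
    MeasurableSet (kBox d lo hi) := by
  rw [kBox_eq]
  exact (MeasurableSet.univ_pi fun i => measurableSet_Icc).preimage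
    (MeasurableEquiv.toLp 2 (Fin d → ℝ)).symm.measurable

private lemma kBox_volume (d : ℕ) (lo hi : Fin d → ℝ) (h : ∀ i, 0 ≤ hi i - lo i) :
    volume (kBox d lo hi) = ENNReal.ofReal (∏ i, (hi i - lo i)) := by
  rw [kBox_eq,
    (EuclideanSpace.volume_preserving_symm_measurableEquiv_toLp (Fin d)).measure_preimage
      ((MeasurableSet.univ_pi fun i => measurableSet_Icc).nullMeasurableSet),
    volume_pi_pi, ENNReal.ofReal_prod_of_nonneg (fun i _ => h i)]
  exact Finset.prod_congr rfl fun i _ => Real.volume_Icc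

/-- normalizing constant: the volume of the Knapp plate -/
private def vpc (d : ℕ) (δ : ℝ) : ℝ := 5⁻¹ * (5⁻¹ * δ / d) ^ (d - 1)

/-- the Knapp plate -/
private def pSet (d : ℕ) [NeZero d] (δ : ℝ) : Set (Ed d) :=
  kBox d (fun i => if i = 0 then 1 else 0) (fun i => if i = 0 then 1 + 5⁻¹ else 5⁻¹ * δ / d)

/-- the Knapp example function -/
private def pF (d : ℕ) [NeZero d] (δ : ℝ) : Ed d → ℂ := (pSet d δ).indicator fun _ => 1

private lemma pSet_volume {d : ℕ} [NeZero d] {δ : ℝ} (hδ0 : 0 < δ) :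
    volume (pSet d δ) = ENNReal.ofReal (vpc d δ) := by
  rw [pSet, kBox_volume d _ _ (fun i => by
    by_cases h : i = 0
    · rw [if_pos h, if_pos h]; norm_num
    · rw [if_neg h, if_neg h, sub_zero]; positivity)]
  congr 1
  rw [Finset.prod_congr rfl (fun i (_ : i ∈ Finset.univ) =>
    show _ = (if i = (0 : Fin d) then (5⁻¹ : ℝ) else 5⁻¹ * δ / d) from by
      split_ifs <;> ring), aux_prod_ite]
  rfl

private lemma rSet_volume {d : ℕ} [NeZero d] {δ : ℝ} (t : ℝ) (hδ0 : 0 < δ) :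
    volume (kBox d (fun i => if i = 0 then -t else 0)
      (fun i => if i = 0 then 1 - t else δ⁻¹)) = ENNReal.ofReal ((δ⁻¹) ^ (d - 1)) := by
  rw [kBox_volume d _ _ (fun i => by
    by_cases h : i = 0
    · rw [if_pos h, if_pos h]; linarith
    · rw [if_neg h, if_neg h, sub_zero]; positivity)]
  congr 1
  rw [Finset.prod_congr rfl (fun i (_ : i ∈ Finset.univ) =>
    show _ = (if i = (0 : Fin d) then (1 : ℝ) else δ⁻¹) from by
      split_ifs <;> ring), aux_prod_ite, one_mul]

private lemma aux_norm {d : ℕ} [NeZero d] (ξ : Ed d) (h0 : 1 ≤ ξ 0) :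
    ξ 0 ≤ ‖ξ‖ ∧ ‖ξ‖ ≤ ξ 0 + (∑ i ∈ Finset.univ.erase 0, (ξ i) ^ 2) / 2 := by
  set s := ∑ i ∈ Finset.univ.erase 0, (ξ i) ^ 2 with hs
  have hs0 : 0 ≤ s := Finset.sum_nonneg fun i _ => sq_nonneg _
  have hsum : ∑ i, (ξ i) ^ 2 = (ξ 0) ^ 2 + s :=
    (Finset.add_sum_erase Finset.univ (fun i => (ξ i) ^ 2) (Finset.mem_univ 0)).symm
  have hnorm : ‖ξ‖ = Real.sqrt ((ξ 0) ^ 2 + s) := by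
    rw [EuclideanSpace.norm_eq, ← hsum]
    congr 1
    exact Finset.sum_congr rfl fun i _ => by rw [Real.norm_eq_abs, sq_abs]
  constructor
  · rw [hnorm]
    calc ξ 0 = Real.sqrt ((ξ 0) ^ 2) := (Real.sqrt_sq (by linarith)).symm
      _ ≤ _ := Real.sqrt_le_sqrt (by linarith)
  · rw [hnorm]
    calc Real.sqrt ((ξ 0) ^ 2 + s) ≤ Real.sqrt ((ξ 0 + s / 2) ^ 2) :=
        Real.sqrt_le_sqrt (by nlinarith)
      _ = ξ 0 + s / 2 := Real.sqrt_sq (by linarith)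

private lemma pSet_facts {d : ℕ} [NeZero d] (hd : 2 ≤ d) {δ : ℝ} (hδ0 : 0 < δ)
    (hδ1 : δ ≤ 1) {ξ : Ed d} (hξ : ξ ∈ pSet d δ) :
    1 ≤ ξ 0 ∧ ξ 0 ≤ 1 + 5⁻¹ ∧ ξ 0 ≤ ‖ξ‖ ∧ ‖ξ‖ ≤ ξ 0 + δ ^ 2 / 50 ∧
      ∀ i, i ≠ 0 → 0 ≤ ξ i ∧ ξ i ≤ 5⁻¹ * δ / d := by
  have hξ' : ∀ i : Fin d, ξ i ∈ Set.Icc (if i = 0 then (1:ℝ) else 0)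
      (if i = 0 then 1 + 5⁻¹ else 5⁻¹ * δ / d) := hξ
  have h0 : ξ 0 ∈ Set.Icc (1:ℝ) (1 + 5⁻¹) := by simpa using hξ' 0
  have hi : ∀ i : Fin d, i ≠ 0 → 0 ≤ ξ i ∧ ξ i ≤ 5⁻¹ * δ / d := by
    intro i hne
    simpa [hne] using hξ' i
  have hd0 : (0 : ℝ) < d := by exact_mod_cast (by omega : 0 < d)
  have hsb : ∑ i ∈ Finset.univ.erase (0 : Fin d), (ξ i) ^ 2 ≤ δ ^ 2 / 50 * 2 := by
    have hcard : (Finset.univ.erase (0 : Fin d)).card = d - 1 := by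
      rw [Finset.card_erase_of_mem (Finset.mem_univ _), Finset.card_univ, Fintype.card_fin]
    have hb : ∀ i ∈ Finset.univ.erase (0 : Fin d), (ξ i) ^ 2 ≤ (5⁻¹ * δ / d) ^ 2 := by
      intro i hi'
      have hne : i ≠ 0 := Finset.ne_of_mem_erase hi'
      exact pow_le_pow_left₀ (hi i hne).1 (hi i hne).2 2
    have h := Finset.sum_le_card_nsmul _ _ _ hb
    rw [hcard, nsmul_eq_mul] at h
    have hdr : ((d - 1 : ℕ) : ℝ) ≤ (d : ℝ) := by exact_mod_cast Nat.sub_le d 1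
    calc ∑ i ∈ Finset.univ.erase (0 : Fin d), (ξ i) ^ 2
        ≤ ((d - 1 : ℕ) : ℝ) * (5⁻¹ * δ / d) ^ 2 := h
      _ ≤ (d : ℝ) * (5⁻¹ * δ / d) ^ 2 := by
          apply mul_le_mul_of_nonneg_right hdr (by positivity)
      _ = δ ^ 2 / (25 * d) := by field_simp; ring
      _ ≤ δ ^ 2 / 50 * 2 := by
          rw [div_le_iff₀ (by positivity : (0:ℝ) < 25 * d)]
          have hd2' : (2:ℝ) ≤ (d:ℝ) := by exact_mod_cast hd
          nlinarith [sq_nonneg δ]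
  obtain ⟨hl, hu⟩ := aux_norm ξ h0.1
  refine ⟨h0.1, h0.2, hl, ?_, hi⟩
  have hsnn : 0 ≤ ∑ i ∈ Finset.univ.erase (0 : Fin d), (ξ i) ^ 2 :=
    Finset.sum_nonneg fun i _ => sq_nonneg _
  linarith

private lemma pSet_subset_ann {d : ℕ} [NeZero d] (hd : 2 ≤ d) {δ : ℝ} (hδ0 : 0 < δ)
    (hδ1 : δ ≤ 1) : pSet d δ ⊆ ann d 1 := by
  intro ξ hξ
  obtain ⟨h1, h2, h3, h4, -⟩ := pSet_facts hd hδ0 hδ1 hξ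
  constructor
  · linarith
  · nlinarith [sq_nonneg δ, sq_nonneg (1 - δ)]

private lemma aux_knapp {d : ℕ} [NeZero d] (hd : 2 ≤ d) {δ t : ℝ} (hδ0 : 0 < δ)
    (hδ1 : δ ≤ 1) (ht0 : 0 ≤ t) (htB : t ≤ (δ⁻¹) ^ 2) {x : Ed d}
    (hx : x ∈ kBox d (fun i => if i = 0 then -t else 0)
      (fun i => if i = 0 then 1 - t else δ⁻¹)) :
    vpc d δ / 2 ≤ ‖extOp (pF d δ) x t‖ := by
  classical
  have hd0 : (0 : ℝ) < d := by exact_mod_cast (by omega : 0 < d)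
  set c : ℝ := x 0 + t with hc
  have hPm : MeasurableSet (pSet d δ) := kBox_measurable d _ _
  have hPvol : volume (pSet d δ) = ENNReal.ofReal (vpc d δ) := pSet_volume hδ0
  have hvpnn : 0 ≤ vpc d δ := by rw [vpc]; positivity
  -- coordinates of x
  have hx' : ∀ i : Fin d, x i ∈ Set.Icc (if i = 0 then -t else (0:ℝ))
      (if i = 0 then 1 - t else δ⁻¹) := hx
  have hx0 : x 0 ∈ Set.Icc (-t) (1 - t) := by simpa using hx' 0
  have hxi : ∀ i : Fin d, i ≠ 0 → 0 ≤ x i ∧ x i ≤ δ⁻¹ := by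
    intro i hne
    simpa [hne] using hx' i
  -- inner product formula
  have hinner : ∀ ξ : Ed d, (inner ℝ x ξ : ℝ) = ∑ i, x i * ξ i := by
    intro ξ
    simp [PiLp.inner_apply, RCLike.inner_apply, mul_comm]
  -- key phase bound
  have key : ∀ ξ ∈ pSet d δ,
      0 ≤ (inner ℝ x ξ : ℝ) + t * ‖ξ‖ - c ∧ (inner ℝ x ξ : ℝ) + t * ‖ξ‖ - c ≤ 1 / 2 := by
    intro ξ hξ
    obtain ⟨hξ1, hξ2, hξ3, hξ4, hξi⟩ := pSet_facts hd hδ0 hδ1 hξ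
    set S' := ∑ i ∈ Finset.univ.erase (0 : Fin d), x i * ξ i with hS'
    have hDeq : (inner ℝ x ξ : ℝ) + t * ‖ξ‖ - c
        = (x 0 + t) * (ξ 0 - 1) + S' + t * (‖ξ‖ - ξ 0) := by
      rw [hinner ξ, ← Finset.add_sum_erase Finset.univ (fun i => x i * ξ i)
        (Finset.mem_univ (0 : Fin d)), hc, ← hS']
      ring
    have hS'0 : 0 ≤ S' :=
      Finset.sum_nonneg fun i hi => mul_nonneg
        (hxi i (Finset.ne_of_mem_erase hi)).1 (hξi i (Finset.ne_of_mem_erase hi)).1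
    have hS'le : S' ≤ 5⁻¹ := by
      have hcard : (Finset.univ.erase (0 : Fin d)).card = d - 1 := by
        rw [Finset.card_erase_of_mem (Finset.mem_univ _), Finset.card_univ,
          Fintype.card_fin]
      have hb : ∀ i ∈ Finset.univ.erase (0 : Fin d), x i * ξ i ≤ δ⁻¹ * (5⁻¹ * δ / d) := by
        intro i hi'
        have hne : i ≠ 0 := Finset.ne_of_mem_erase hi'
        exact mul_le_mul (hxi i hne).2 (hξi i hne).2 (hξi i hne).1 (by positivity)
      have h := Finset.sum_le_card_nsmul _ _ _ hb
      rw [hcard, nsmul_eq_mul] at h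
      have heq : δ⁻¹ * (5⁻¹ * δ / d) = 5⁻¹ / d := by field_simp
      rw [heq] at h
      have hdr : ((d - 1 : ℕ) : ℝ) ≤ (d : ℝ) := by exact_mod_cast Nat.sub_le d 1
      calc S' ≤ ((d - 1 : ℕ) : ℝ) * (5⁻¹ / d) := h
        _ ≤ (d : ℝ) * (5⁻¹ / d) := mul_le_mul_of_nonneg_right hdr (by positivity)
        _ = 5⁻¹ := by field_simp
    have ht1 : 0 ≤ t * (‖ξ‖ - ξ 0) := mul_nonneg ht0 (by linarith)
    have ht2 : t * (‖ξ‖ - ξ 0) ≤ 1 / 50 := by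
      have h1 : t * (‖ξ‖ - ξ 0) ≤ (δ⁻¹) ^ 2 * (δ ^ 2 / 50) := by
        apply mul_le_mul htB (by linarith) (by linarith) (by positivity)
      have h2 : (δ⁻¹) ^ 2 * (δ ^ 2 / 50) = 1 / 50 := by
        field_simp
      linarith
    have hxt0 : 0 ≤ x 0 + t := by linarith [hx0.1]
    have hxt1 : x 0 + t ≤ 1 := by linarith [hx0.2]
    have hp1 : 0 ≤ (x 0 + t) * (ξ 0 - 1) := mul_nonneg hxt0 (by linarith)
    have hp2 : (x 0 + t) * (ξ 0 - 1) ≤ 5⁻¹ := by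
      calc (x 0 + t) * (ξ 0 - 1) ≤ 1 * 5⁻¹ :=
        mul_le_mul hxt1 (by linarith) (by linarith) zero_le_one
        _ = 5⁻¹ := one_mul _
    constructor
    · rw [hDeq]; linarith
    · rw [hDeq]; linarith
  -- rewrite the extension operator as a set integral
  have hext : extOp (pF d δ) x t = ∫ ξ in pSet d δ,
      Complex.exp ((((inner ℝ x ξ : ℝ) + t * ‖ξ‖ : ℝ) : ℂ) * Complex.I) := by
    rw [extOp, ← MeasureTheory.integral_indicator hPm]
    congr 1
    funext ξ
    rw [show pF d δ ξ = (pSet d δ).indicator (fun _ => (1:ℂ)) ξ from rfl,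
      Set.indicator_apply, Set.indicator_apply]
    split_ifs with h
    · rw [mul_one]; congr 1; push_cast; ring
    · rw [mul_zero]
  -- continuity and integrability
  have hφcont : Continuous fun ξ : Ed d => ((inner ℝ x ξ : ℝ) + t * ‖ξ‖) :=
    (continuous_const.inner continuous_id).add (continuous_const.mul continuous_norm)
  haveI hfm : IsFiniteMeasure (volume.restrict (pSet d δ)) := by
    constructor
    rw [Measure.restrict_apply_univ, hPvol]
    exact ENNReal.ofReal_lt_top
  have hintexp : Integrable
      (fun ξ : Ed d => Complex.exp ((((inner ℝ x ξ : ℝ) + t * ‖ξ‖ - c : ℝ) : ℂ) * Complex.I))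
      (volume.restrict (pSet d δ)) := by
    refine Integrable.mono' (integrable_const 1) ?_ ?_
    · exact (Complex.continuous_exp.comp ((Complex.continuous_ofReal.comp
        (hφcont.sub continuous_const)).mul continuous_const)).aestronglyMeasurable
    · filter_upwards with ξ
      rw [Complex.norm_exp_ofReal_mul_I]
  have hintcos : MeasureTheory.IntegrableOn
      (fun ξ : Ed d => Real.cos ((inner ℝ x ξ : ℝ) + t * ‖ξ‖ - c)) (pSet d δ) volume := by
    refine Integrable.mono' (integrable_const 1) ?_ ?_
    · exact (Real.continuous_cos.comp (hφcont.sub continuous_const)).aestronglyMeasurable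
    · filter_upwards with ξ
      rw [Real.norm_eq_abs]
      exact Real.abs_cos_le_one _
  -- real part computation
  have h2 : (Complex.exp (((-c : ℝ) : ℂ) * Complex.I) * extOp (pF d δ) x t).re
      = ∫ ξ in pSet d δ, Real.cos ((inner ℝ x ξ : ℝ) + t * ‖ξ‖ - c) := by
    rw [hext, ← integral_const_mul]
    have heq : ∀ ξ : Ed d,
        Complex.exp (((-c : ℝ) : ℂ) * Complex.I) *
          Complex.exp ((((inner ℝ x ξ : ℝ) + t * ‖ξ‖ : ℝ) : ℂ) * Complex.I)
        = Complex.exp ((((inner ℝ x ξ : ℝ) + t * ‖ξ‖ - c : ℝ) : ℂ) * Complex.I) := by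
      intro ξ
      rw [← Complex.exp_add]
      congr 1
      push_cast
      ring
    simp_rw [heq]
    have h5 := integral_re (μ := volume.restrict (pSet d δ)) hintexp
    simp only [RCLike.re_to_complex] at h5
    rw [← h5]
    simp only [Complex.exp_ofReal_mul_I_re]
  -- lower bound on the cosine integral
  have h3 : 1 / 2 * (volume (pSet d δ)).toReal
      ≤ ∫ ξ in pSet d δ, Real.cos ((inner ℝ x ξ : ℝ) + t * ‖ξ‖ - c) := by
    rw [mul_comm, ← smul_eq_mul]
    show volume.real (pSet d δ) • (1 / 2 : ℝ) ≤ _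
    apply MeasureTheory.setIntegral_ge_of_const_le hPm
      (by rw [hPvol]; exact ENNReal.ofReal_ne_top) _ hintcos
    intro ξ hξ
    obtain ⟨hD0, hD1⟩ := key ξ hξ
    have hcos := Real.one_sub_sq_div_two_le_cos (x := (inner ℝ x ξ : ℝ) + t * ‖ξ‖ - c)
    nlinarith
  calc vpc d δ / 2 = 1 / 2 * (volume (pSet d δ)).toReal := by
        rw [hPvol, ENNReal.toReal_ofReal hvpnn]; ring
    _ ≤ ∫ ξ in pSet d δ, Real.cos ((inner ℝ x ξ : ℝ) + t * ‖ξ‖ - c) := h3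
    _ = (Complex.exp (((-c : ℝ) : ℂ) * Complex.I) * extOp (pF d δ) x t).re := h2.symm
    _ ≤ ‖Complex.exp (((-c : ℝ) : ℂ) * Complex.I) * extOp (pF d δ) x t‖ := by
        exact Complex.re_le_norm _
    _ = ‖extOp (pF d δ) x t‖ := by
        rw [norm_mul, Complex.norm_exp_ofReal_mul_I, one_mul]

end Stmt11Aux


set_option maxHeartbeats 2000000 in
/-- necessity of `q ≥ 2(d−1+2α)/(d−1)` for the sparse bilinear cone
estimate without angular separation. -/
theorem stmt11 (d : ℕ) (hd : 2 ≤ d) (α q : ℝ) (hα0 : 0 < α) (hα1 : α ≤ 1)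
    (hq : 0 < q) :
    ∃ C₀ : ℝ, 0 < C₀ ∧
      ∀ C : ℝ,
        (∀ T : Set ℝ, SparseFamily α C₀ T →
          ∀ f g : Ed d → ℂ, MemLp f 2 volume → MemLp g 2 volume →
            Function.support f ⊆ ann d 1 → Function.support g ⊆ ann d 1 →
            (∫⁻ t in ⋃ s ∈ T, Set.Ico s (s + 1),
                ∫⁻ x, (‖extOp f x t * extOp g x t‖₊ : ℝ≥0∞) ^ (q / 2) ∂volume ∂volume)
                ^ (2 / q)
              ≤ ENNReal.ofReal C * (eLpNorm f 2 volume * eLpNorm g 2 volume)) →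
        2 * ((d : ℝ) - 1 + 2 * α) / ((d : ℝ) - 1) ≤ q := by
  classical
  refine ⟨4, by norm_num, ?_⟩
  intro C hC
  by_contra hq'
  push_neg at hq'
  haveI : NeZero d := ⟨by omega⟩
  have hd2 : (2 : ℝ) ≤ (d : ℝ) := by exact_mod_cast hd
  have hd1 : (0 : ℝ) < (d : ℝ) - 1 := by linarith
  have hd0 : (0 : ℝ) < (d : ℝ) := by linarith
  have hd1n : ((d - 1 : ℕ) : ℝ) = (d : ℝ) - 1 := by
    rw [Nat.cast_sub (by omega : 1 ≤ d), Nat.cast_one]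
  rw [lt_div_iff₀ hd1] at hq'
  -- constants
  set K₁ : ℝ := 5⁻¹ * (5⁻¹ / d) ^ (d - 1) with hK₁
  have hK₁0 : 0 < K₁ := by positivity
  set C' : ℝ := max C 1 with hC'
  have hC'0 : 0 < C' := lt_of_lt_of_le one_pos (le_max_right _ _)
  set E : ℝ := ((d : ℝ) - 1) * q + (-((d : ℝ) - 1)) + (-(2 * α)) - ((d : ℝ) - 1) * (q / 2)
    with hE
  have hE0 : E < 0 := by rw [hE]; nlinarith
  set K₂ : ℝ := (C' * K₁) ^ (q / 2) / ((K₁ / 2) ^ q / 4) with hK₂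
  have hK₂0 : 0 < K₂ := by positivity
  set δ₀ : ℝ := (4 : ℝ)⁻¹ ^ (2 * α)⁻¹ with hδ₀
  have hδ₀0 : 0 < δ₀ := Real.rpow_pos_of_pos (by norm_num) _
  have hδ₀half : δ₀ ≤ 2⁻¹ := by
    have h1 : (2 : ℝ)⁻¹ ≤ (2 * α)⁻¹ := by
      have h2 : 0 < 2 * α := by linarith
      have h3 : (2 * α) * (2 * α)⁻¹ = 1 := mul_inv_cancel₀ h2.ne'
      nlinarith [inv_pos.mpr h2]
    calc δ₀ ≤ (4 : ℝ)⁻¹ ^ (2 : ℝ)⁻¹ :=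
        Real.rpow_le_rpow_of_exponent_ge (by norm_num) (by norm_num) h1
      _ = 2⁻¹ := by
        rw [show ((4 : ℝ)⁻¹) = ((2 : ℝ)⁻¹) ^ (2 : ℕ) by norm_num,
          ← Real.rpow_natCast ((2 : ℝ)⁻¹) 2, ← Real.rpow_mul (by norm_num)]
        norm_num
  -- the key estimate for every small δ
  have key : ∀ δ : ℝ, 0 < δ → δ ≤ δ₀ → δ ^ E ≤ K₂ := by
    intro δ hδ0 hδup
    have hδhalf : δ ≤ 2⁻¹ := le_trans hδup hδ₀half
    have hδ1 : δ ≤ 1 := by linarith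
    set B : ℝ := (δ⁻¹) ^ 2 with hB
    have h2δ : (2 : ℝ) ≤ δ⁻¹ := by
      have h3 : δ * δ⁻¹ = 1 := mul_inv_cancel₀ hδ0.ne'
      nlinarith [inv_pos.mpr hδ0]
    have hB4 : (4 : ℝ) ≤ B := by rw [hB]; nlinarith
    have hδ2α : δ ^ (2 * α) ≤ 4⁻¹ := by
      calc δ ^ (2 * α) ≤ δ₀ ^ (2 * α) :=
          Real.rpow_le_rpow hδ0.le hδup (by linarith)
        _ = 4⁻¹ := by
          rw [hδ₀, ← Real.rpow_mul (by norm_num), inv_mul_cancel₀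
            (by positivity : (2 * α) ≠ 0), Real.rpow_one]
    have hδm2α : (4 : ℝ) ≤ δ ^ (-(2 * α)) := by
      rw [Real.rpow_neg hδ0.le]
      have h1 : 0 < δ ^ (2 * α) := Real.rpow_pos_of_pos hδ0 _
      have h3 : δ ^ (2 * α) * (δ ^ (2 * α))⁻¹ = 1 := mul_inv_cancel₀ h1.ne'
      nlinarith [inv_pos.mpr h1]
    have hBα : B ^ α = δ ^ (-(2 * α)) := by
      rw [hB, ← Real.rpow_neg_one δ, ← Real.rpow_natCast (δ ^ (-1 : ℝ)) 2,
        ← Real.rpow_mul hδ0.le, ← Real.rpow_mul hδ0.le]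
      norm_num
    set M : ℕ := ⌊(B - 1) ^ α⌋₊ with hM
    have hu0 : (0 : ℝ) ≤ B - 1 := by linarith
    have hMlb : δ ^ (-(2 * α)) / 4 ≤ (M : ℝ) := by
      have h1 : B / 2 ≤ B - 1 := by linarith
      have h2 : (B / 2) ^ α ≤ (B - 1) ^ α :=
        Real.rpow_le_rpow (by linarith) h1 hα0.le
      have h2α2 : (2 : ℝ) ^ α ≤ 2 := by
        calc (2 : ℝ) ^ α ≤ (2 : ℝ) ^ (1 : ℝ) :=
            Real.rpow_le_rpow_of_exponent_le one_le_two hα1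
          _ = 2 := Real.rpow_one 2
      have h3 : B ^ α / 2 ≤ (B / 2) ^ α := by
        rw [Real.div_rpow (by linarith) (by norm_num)]
        have h4 : (0 : ℝ) < (2:ℝ) ^ α := Real.rpow_pos_of_pos (by norm_num) _
        rw [div_le_div_iff₀ (by norm_num) h4]
        have h5 : 0 ≤ B ^ α := Real.rpow_nonneg (by linarith) _
        nlinarith
      have h4 : (B - 1) ^ α - 1 < (M : ℝ) := Nat.sub_one_lt_floor _
      rw [← hBα]
      linarith [hδm2α, hBα]
    have hM1 : 1 ≤ M := by
      have h1 : (1 : ℝ) ≤ (M : ℝ) := by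
        have h2 : (1 : ℝ) ≤ δ ^ (-(2 * α)) / 4 := by linarith
        linarith
      exact_mod_cast h1
    have hMub : (M : ℝ) ≤ (B - 1) ^ α := Nat.floor_le (by positivity)
    -- the plate and its properties
    have hPm : MeasurableSet (pSet d δ) := kBox_measurable d _ _
    have hPvol : volume (pSet d δ) = ENNReal.ofReal (vpc d δ) := pSet_volume hδ0
    set vp : ℝ := vpc d δ with hvp
    have hvp0 : 0 < vp := by rw [hvp, vpc]; positivity
    have hmem : MemLp (pF d δ) 2 volume := by
      rw [show pF d δ = (pSet d δ).indicator fun _ => (1 : ℂ) from rfl]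
      exact memLp_indicator_const 2 hPm 1 (Or.inr (by rw [hPvol]; exact ENNReal.ofReal_ne_top))
    have hsupp : Function.support (pF d δ) ⊆ ann d 1 := by
      rw [show pF d δ = (pSet d δ).indicator fun _ => (1 : ℂ) from rfl]
      exact subset_trans Set.support_indicator_subset (pSet_subset_ann hd hδ0 hδ1)
    have happ := hC (Set.range (gfun α)) (aux_sparse hα0 hα1) (pF d δ) (pF d δ)
      hmem hmem hsupp hsupp
    -- right hand side
    have heLp : eLpNorm (pF d δ) 2 volume = ENNReal.ofReal vp ^ ((1 : ℝ) / 2) := by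
      rw [show pF d δ = (pSet d δ).indicator fun _ => (1 : ℂ) from rfl,
        eLpNorm_indicator_const hPm (by norm_num) (by norm_num), hPvol]
      simp
    have hRHS : ENNReal.ofReal C * (eLpNorm (pF d δ) 2 volume * eLpNorm (pF d δ) 2 volume)
        ≤ ENNReal.ofReal (C' * vp) := by
      rw [heLp, ← ENNReal.rpow_add _ _ (by simp [hvp0.ne', ENNReal.ofReal_eq_zero]; linarith)
        ENNReal.ofReal_ne_top]
      norm_num
      rw [ENNReal.ofReal_mul hC'0.le]
      exact mul_le_mul_left (ENNReal.ofReal_le_ofReal (le_max_left C 1)) _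
    -- lower bound for the inner integral
    set w : ℝ := ((vp / 2) ^ 2) ^ (q / 2) * (δ⁻¹) ^ (d - 1) with hw
    have hw0 : 0 < w := by positivity
    have hinner : ∀ t : ℝ, 0 ≤ t → t ≤ B →
        ENNReal.ofReal w ≤ ∫⁻ x, (‖extOp (pF d δ) x t * extOp (pF d δ) x t‖₊ : ℝ≥0∞)
          ^ (q / 2) ∂volume := by
      intro t ht0 htB
      set Rt := kBox d (fun i => if i = 0 then -t else 0)
        (fun i => if i = 0 then 1 - t else δ⁻¹) with hRt
      have hRm : MeasurableSet Rt := kBox_measurable d _ _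
      have hRvol : volume Rt = ENNReal.ofReal ((δ⁻¹) ^ (d - 1)) := rSet_volume t hδ0
      have hpt : ∀ x ∈ Rt, ENNReal.ofReal ((vp / 2) ^ 2) ^ (q / 2)
          ≤ (‖extOp (pF d δ) x t * extOp (pF d δ) x t‖₊ : ℝ≥0∞) ^ (q / 2) := by
        intro x hxR
        have hk := aux_knapp hd hδ0 hδ1 ht0 (by rw [← hB]; exact htB) hxR
        apply ENNReal.rpow_le_rpow _ (by positivity)
        rw [← enorm_eq_nnnorm, ← ofReal_norm]
        apply ENNReal.ofReal_le_ofReal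
        rw [norm_mul]
        nlinarith [hk, norm_nonneg (extOp (pF d δ) x t), hvp0]
      calc ENNReal.ofReal w
          = ENNReal.ofReal ((vp / 2) ^ 2) ^ (q / 2) * volume Rt := by
            rw [hRvol, ENNReal.ofReal_rpow_of_pos (by positivity),
              ← ENNReal.ofReal_mul (by positivity)]
        _ = ∫⁻ x in Rt, ENNReal.ofReal ((vp / 2) ^ 2) ^ (q / 2) ∂volume :=
            (setLIntegral_const _ _).symm
        _ ≤ ∫⁻ x in Rt, (‖extOp (pF d δ) x t * extOp (pF d δ) x t‖₊ : ℝ≥0∞)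
              ^ (q / 2) ∂volume := setLIntegral_mono' hRm hpt
        _ ≤ _ := setLIntegral_le_lintegral _ _
    -- the sparse time set
    set U : Set ℝ := ⋃ n ∈ Finset.range M, Set.Ico (gfun α n) (gfun α n + 1) with hU
    have hUm : MeasurableSet U :=
      (Finset.range M).measurableSet_biUnion fun n _ => measurableSet_Ico
    have hUsub : U ⊆ ⋃ s ∈ Set.range (gfun α), Set.Ico s (s + 1) := by
      intro τ hτ
      obtain ⟨n, hn, hτ2⟩ := Set.mem_iUnion₂.mp hτ
      exact Set.mem_biUnion ⟨n, rfl⟩ hτ2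
    have hUvol : volume U = (M : ℝ≥0∞) := by
      rw [hU, measure_biUnion_finset ?_ fun n _ => measurableSet_Ico]
      · simp [Real.volume_Ico]
      · intro m hm n hn hmn
        simp only [Function.onFun]
        rcases hmn.lt_or_gt with h | h
        · exact Set.Ico_disjoint_Ico.mpr (le_trans (min_le_left _ _)
            (le_trans (aux_gstep hα0 hα1 h) (le_max_right _ _)))
        · exact Set.Ico_disjoint_Ico.mpr (le_trans (min_le_right _ _)
            (le_trans (aux_gstep hα0 hα1 h) (le_max_left _ _)))
    have hUB : ∀ τ ∈ U, 0 ≤ τ ∧ τ ≤ B := by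
      intro τ hτ
      obtain ⟨n, hn, hτ2⟩ := Set.mem_iUnion₂.mp hτ
      have hn' : n < M := Finset.mem_range.mp hn
      have h1 : (n : ℝ) ≤ (B - 1) ^ α := by
        have : (n : ℝ) < (M : ℝ) := by exact_mod_cast hn'
        linarith
      have h2 : gfun α n ≤ B - 1 := by
        calc gfun α n = (n : ℝ) ^ α⁻¹ := rfl
          _ ≤ ((B - 1) ^ α) ^ α⁻¹ :=
            Real.rpow_le_rpow (Nat.cast_nonneg n) h1 (by positivity)
          _ = B - 1 := Real.rpow_rpow_inv hu0 hα0.ne'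
      exact ⟨le_trans (gfun_nonneg α n) hτ2.1, by linarith [hτ2.2]⟩
    -- combine
    have hLHS : ENNReal.ofReal (w * M) ≤ ∫⁻ t in ⋃ s ∈ Set.range (gfun α),
        Set.Ico s (s + 1), ∫⁻ x, (‖extOp (pF d δ) x t * extOp (pF d δ) x t‖₊ : ℝ≥0∞)
          ^ (q / 2) ∂volume ∂volume := by
      calc ENNReal.ofReal (w * M) = ENNReal.ofReal w * (M : ℝ≥0∞) := by
            rw [ENNReal.ofReal_mul hw0.le, ENNReal.ofReal_natCast]
        _ = ENNReal.ofReal w * volume U := by rw [hUvol]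
        _ = ∫⁻ t in U, ENNReal.ofReal w ∂volume := (setLIntegral_const _ _).symm
        _ ≤ ∫⁻ t in U, ∫⁻ x, (‖extOp (pF d δ) x t * extOp (pF d δ) x t‖₊ : ℝ≥0∞)
              ^ (q / 2) ∂volume ∂volume :=
            setLIntegral_mono' hUm fun t ht => hinner t (hUB t ht).1 (hUB t ht).2
        _ ≤ _ := lintegral_mono_set hUsub
    have hfinal : ENNReal.ofReal (w * M) ^ (2 / q) ≤ ENNReal.ofReal (C' * vp) :=
      le_trans (ENNReal.rpow_le_rpow hLHS (by positivity)) (le_trans happ hRHS)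
    have hwM0 : (0 : ℝ) < w * M := by
      have : (1 : ℝ) ≤ (M : ℝ) := by exact_mod_cast hM1
      nlinarith
    have hreal : (w * M) ^ (2 / q) ≤ C' * vp := by
      rw [ENNReal.ofReal_rpow_of_pos hwM0] at hfinal
      exact (ENNReal.ofReal_le_ofReal_iff (by positivity)).mp hfinal
    have hstar : w * M ≤ (C' * vp) ^ (q / 2) := by
      have h1 := Real.rpow_le_rpow (by positivity) hreal (by positivity : (0:ℝ) ≤ q / 2)
      rw [← Real.rpow_mul hwM0.le] at h1
      have h2 : 2 / q * (q / 2) = 1 := by field_simp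
      rwa [h2, Real.rpow_one] at h1
    -- unravel the powers of δ
    have hvpK : vp = K₁ * δ ^ (d - 1) := by
      rw [hvp, vpc, hK₁, show 5⁻¹ * δ / (d : ℝ) = 5⁻¹ / d * δ from by ring, mul_pow]
      ring
    have hvpq : ((vp / 2) ^ 2) ^ (q / 2) = (vp / 2) ^ q := by
      rw [← Real.rpow_natCast (vp / 2) 2, ← Real.rpow_mul (by positivity)]
      congr 1
      push_cast
      ring
    have hdpow : (δ : ℝ) ^ (d - 1) = δ ^ ((d : ℝ) - 1) := by
      rw [← Real.rpow_natCast δ (d - 1), hd1n]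
    have L1 : (vp / 2) ^ q = (K₁ / 2) ^ q * δ ^ (((d : ℝ) - 1) * q) := by
      rw [hvpK, show K₁ * δ ^ (d - 1) / 2 = K₁ / 2 * δ ^ (d - 1) from by ring, hdpow,
        Real.mul_rpow (by positivity) (by positivity), ← Real.rpow_mul hδ0.le]
    have L2 : ((δ⁻¹ : ℝ)) ^ (d - 1) = δ ^ (-((d : ℝ) - 1)) := by
      rw [← Real.rpow_natCast δ⁻¹ (d - 1), hd1n, ← Real.rpow_neg_one δ,
        ← Real.rpow_mul hδ0.le]
      congr 1
      ring
    have L4 : (C' * vp) ^ (q / 2) = (C' * K₁) ^ (q / 2) * δ ^ (((d : ℝ) - 1) * (q / 2)) := by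
      rw [hvpK, show C' * (K₁ * δ ^ (d - 1)) = C' * K₁ * δ ^ (d - 1) from by ring, hdpow,
        Real.mul_rpow (by positivity) (by positivity), ← Real.rpow_mul hδ0.le]
    have hchain : (K₁ / 2) ^ q * δ ^ (((d : ℝ) - 1) * q) * δ ^ (-((d : ℝ) - 1)) *
        (δ ^ (-(2 * α)) / 4) ≤ (C' * K₁) ^ (q / 2) * δ ^ (((d : ℝ) - 1) * (q / 2)) := by
      calc (K₁ / 2) ^ q * δ ^ (((d : ℝ) - 1) * q) * δ ^ (-((d : ℝ) - 1)) *
            (δ ^ (-(2 * α)) / 4)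
          ≤ (K₁ / 2) ^ q * δ ^ (((d : ℝ) - 1) * q) * δ ^ (-((d : ℝ) - 1)) * M :=
            mul_le_mul_of_nonneg_left hMlb (by positivity)
        _ = w * M := by rw [hw, hvpq, L1, L2]
        _ ≤ (C' * vp) ^ (q / 2) := hstar
        _ = _ := L4
    have hfrac : δ ^ E = δ ^ (((d : ℝ) - 1) * q) * δ ^ (-((d : ℝ) - 1)) * δ ^ (-(2 * α))
        / δ ^ (((d : ℝ) - 1) * (q / 2)) := by
      rw [← Real.rpow_add hδ0, ← Real.rpow_add hδ0, ← Real.rpow_sub hδ0, hE]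
    rw [hfrac, hK₂, div_le_div_iff₀ (Real.rpow_pos_of_pos hδ0 _) (by positivity)]
    have hre : δ ^ (((d : ℝ) - 1) * q) * δ ^ (-((d : ℝ) - 1)) * δ ^ (-(2 * α)) *
        ((K₁ / 2) ^ q / 4) = (K₁ / 2) ^ q * δ ^ (((d : ℝ) - 1) * q) *
        δ ^ (-((d : ℝ) - 1)) * (δ ^ (-(2 * α)) / 4) := by ring
    rw [hre]
    exact hchain
  -- derive the contradiction
  set δ₁ : ℝ := min δ₀ ((K₂ + 1) ^ E⁻¹) with hδ₁
  have h1 : 0 < δ₁ := lt_min hδ₀0 (Real.rpow_pos_of_pos (by linarith) _)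
  have h2 := key δ₁ h1 (min_le_left _ _)
  have h3 : (K₂ + 1 : ℝ) ≤ δ₁ ^ E := by
    have h4 : δ₁ ≤ (K₂ + 1) ^ E⁻¹ := min_le_right _ _
    have h5 := Real.rpow_le_rpow_of_nonpos h1 h4 hE0.le
    rwa [← Real.rpow_mul (by linarith : (0 : ℝ) ≤ K₂ + 1), inv_mul_cancel₀ hE0.ne,
      Real.rpow_one] at h5
  linarith

end
end

section
/- Let d ≥ 2, 0 < α ≤ 1, and q > 0. There is a constant C₀ = C₀(α) such that the following necessity holds: if there exists a constant C such that for every collection 𝓘 of pairwise disjoint unit intervals in ℝ that is α-sparse with constant C₀, with Γ = ∪_{I∈𝓘} I, and for all f, g ∈ L²(ℝ^d) with supp f ⊂ {ξ ∈ 𝔸₁ : |ξ/|ξ| − e₁| ≤ 1/2} and supp g ⊂ {ξ ∈ 𝔸₁ : |ξ/|ξ| + e₁| ≤ 1/2} (so the angular supports are separated by distance comparable to 1), one has (∫_Γ ∫_{ℝ^d} |ℛ*f(x,t) · ℛ*g(x,t)|^{q/2} dx dt)^{2/q} ≤ C ‖f‖_{L²} ‖g‖_{L²}, then necessarily q ≥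 2(d+1+2α)/(d+1). -/
set_option maxHeartbeats 1000000


open MeasureTheory Metric Set ENNReal

noncomputable section

lemma rpow_subadd {x y a : ℝ} (hx : 0 ≤ x) (hy : 0 ≤ y) (h0 : 0 ≤ a) (h1 : a ≤ 1) :
    (x + y) ^ a ≤ x ^ a + y ^ a := by
  have h := NNReal.rpow_add_le_add_rpow x.toNNReal y.toNNReal h0 h1
  have h' := NNReal.coe_le_coe.2 h
  rw [← Real.toNNReal_add hx hy] at h'
  simp only [NNReal.coe_rpow, NNReal.coe_add, Real.coe_toNNReal _ hx, Real.coe_toNNReal _ hy,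
    Real.coe_toNNReal _ (by linarith : (0:ℝ) ≤ x + y)] at h'
  exact h'

lemma rpow_superadd {x y a : ℝ} (hx : 0 ≤ x) (hy : 0 ≤ y) (h1 : 1 ≤ a) :
    x ^ a + y ^ a ≤ (x + y) ^ a := by
  have ha : (0:ℝ) < a := lt_of_lt_of_le zero_lt_one h1
  have h := NNReal.rpow_add_rpow_le_add x.toNNReal y.toNNReal h1
  have h2 := NNReal.rpow_le_rpow h ha.le
  rw [← NNReal.rpow_mul, one_div, inv_mul_cancel₀ ha.ne', NNReal.rpow_one] at h2
  have h' := NNReal.coe_le_coe.2 h2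
  rw [← Real.toNNReal_add hx hy] at h'
  simp only [NNReal.coe_rpow, NNReal.coe_add, Real.coe_toNNReal _ hx, Real.coe_toNNReal _ hy,
    Real.coe_toNNReal _ (by linarith : (0:ℝ) ≤ x + y)] at h'
  exact h'

/-- Closed boxes in `Ed d`. -/
def EBox {d : ℕ} (a b : Fin d → ℝ) : Set (Ed d) := {ξ | ∀ i, ξ i ∈ Set.Icc (a i) (b i)}

lemma ebox_eq {d : ℕ} (a b : Fin d → ℝ) :
    EBox a b = (MeasurableEquiv.toLp 2 (Fin d → ℝ)).symm ⁻¹'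
      (Set.univ.pi fun i => Set.Icc (a i) (b i)) := by
  ext ξ
  simp only [EBox, Set.mem_setOf_eq, Set.mem_preimage, Set.mem_univ_pi]
  rfl

lemma ebox_meas {d : ℕ} (a b : Fin d → ℝ) : MeasurableSet (EBox a b) := by
  rw [ebox_eq]
  exact (MeasurableEquiv.toLp 2 (Fin d → ℝ)).symm.measurable
    (MeasurableSet.univ_pi fun i => measurableSet_Icc)

lemma ebox_vol {d : ℕ} (a b : Fin d → ℝ) :
    volume (EBox a b) = ∏ i, ENNReal.ofReal (b i - a i) := by
  rw [ebox_eq, (EuclideanSpace.volume_preserving_symm_measurableEquiv_toLp (Fin d)).measure_preimage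
    (MeasurableSet.univ_pi fun i => measurableSet_Icc).nullMeasurableSet]
  rw [volume_pi_pi]
  simp [Real.volume_Icc]

lemma ebox_compact {d : ℕ} (a b : Fin d → ℝ) : IsCompact (EBox a b) := by
  have hclosed : IsClosed (EBox a b) := by
    have : EBox a b = ⋂ i, (fun ξ : Ed d => ξ i) ⁻¹' Set.Icc (a i) (b i) := by
      ext ξ; simp [EBox]
    rw [this]
    exact isClosed_iInter fun i => IsClosed.preimage ((continuous_apply i).comp (PiLp.continuous_ofLp 2 _)) isClosed_Icc
  set M : ℝ := Real.sqrt (∑ i, (|a i| + |b i|)^2) with hM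
  have hsub : EBox a b ⊆ Metric.closedBall (0 : Ed d) M := by
    intro ξ hξ
    rw [Metric.mem_closedBall, dist_zero_right, EuclideanSpace.norm_eq]
    apply Real.sqrt_le_sqrt
    apply Finset.sum_le_sum
    intro i _
    have h1 := (hξ i).1; have h2 := (hξ i).2
    have : |ξ i| ≤ |a i| + |b i| := by
      rw [abs_le]
      constructor
      · have h3 := neg_abs_le (a i); have h4 := abs_nonneg (b i); linarith
      · have h3 := le_abs_self (b i); have h4 := abs_nonneg (a i); linarith
    calc ‖ξ i‖ ^ 2 = |ξ i| ^ 2 := by rw [Real.norm_eq_abs]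
      _ ≤ (|a i| + |b i|) ^ 2 := by
          apply pow_le_pow_left₀ (abs_nonneg _) this
  exact (isCompact_closedBall (0:Ed d) M).of_isClosed_subset hclosed hsub



lemma osc_lower {d : ℕ} {τ : Set (Ed d)} (hm : MeasurableSet τ) (hc : IsCompact τ)
    {φ : Ed d → ℝ} (hφ : Continuous φ) {θ₀ : ℝ}
    (hb : ∀ ξ ∈ τ, |φ ξ - θ₀| ≤ 1 / 2) :
    (volume τ).toReal / 2 ≤
      ‖∫ ξ : Ed d, Complex.exp (Complex.I * (φ ξ : ℂ)) * τ.indicator (fun _ => (1:ℂ)) ξ‖ := by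
  have hInd : (fun ξ : Ed d => Complex.exp (Complex.I * (φ ξ : ℂ)) * τ.indicator (fun _ => (1:ℂ)) ξ)
      = fun ξ => τ.indicator (fun ξ => Complex.exp (Complex.I * (φ ξ : ℂ))) ξ := by
    funext ξ; by_cases h : ξ ∈ τ <;> simp [h]
  rw [hInd, integral_indicator hm]
  set I₀ := ∫ ξ in τ, Complex.exp (Complex.I * (φ ξ : ℂ)) with hI₀
  have hcont : Continuous fun ξ : Ed d => Complex.exp (Complex.I * ((φ ξ - θ₀ : ℝ) : ℂ)) := by
    fun_prop
  have hint2 : IntegrableOn (fun ξ : Ed d => Complex.exp (Complex.I * ((φ ξ - θ₀ : ℝ) : ℂ))) τ :=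
    hcont.continuousOn.integrableOn_compact hc
  have key : Complex.exp (-(Complex.I * (θ₀:ℂ))) * I₀
      = ∫ ξ in τ, Complex.exp (Complex.I * ((φ ξ - θ₀ : ℝ):ℂ)) := by
    rw [hI₀, ← integral_const_mul]
    congr 1; funext ξ
    rw [← Complex.exp_add]; congr 1; push_cast; ring
  have hre : (∫ ξ in τ, Complex.exp (Complex.I * ((φ ξ - θ₀ : ℝ):ℂ))).re
      = ∫ ξ in τ, Real.cos (φ ξ - θ₀) := by
    simp only [← RCLike.re_to_complex]
    rw [← integral_re hint2]
    congr 1; funext ξ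
    simp only [RCLike.re_to_complex]
    rw [mul_comm]
    exact Complex.exp_ofReal_mul_I_re _
  have hcos : (volume τ).toReal / 2 ≤ ∫ ξ in τ, Real.cos (φ ξ - θ₀) := by
    have hint3 : IntegrableOn (fun ξ : Ed d => Real.cos (φ ξ - θ₀)) τ :=
      (Real.continuous_cos.comp (hφ.sub continuous_const)).continuousOn.integrableOn_compact hc
    have h12 : ∀ ξ ∈ τ, (1:ℝ)/2 ≤ Real.cos (φ ξ - θ₀) := by
      intro ξ hξ
      have h3 : (3:ℝ) ≤ Real.pi := Real.pi_gt_three.le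
      have habs : |φ ξ - θ₀| ≤ Real.pi / 3 := (hb ξ hξ).trans (by linarith)
      calc (1:ℝ)/2 = Real.cos (Real.pi/3) := Real.cos_pi_div_three.symm
        _ ≤ Real.cos |φ ξ - θ₀| :=
            Real.cos_le_cos_of_nonneg_of_le_pi (abs_nonneg _) (by linarith) habs
        _ = Real.cos (φ ξ - θ₀) := Real.cos_abs _
    calc (volume τ).toReal / 2 = ∫ _ξ in τ, (1:ℝ)/2 := by
          rw [setIntegral_const]; simp [smul_eq_mul]; rfl
      _ ≤ ∫ ξ in τ, Real.cos (φ ξ - θ₀) :=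
          setIntegral_mono_on (integrableOn_const hc.measure_lt_top.ne) hint3 hm h12
  have hre2 : (Complex.exp (-(Complex.I * (θ₀:ℂ))) * I₀).re ≤ ‖I₀‖ := by
    have := Complex.re_le_norm (Complex.exp (-(Complex.I * (θ₀:ℂ))) * I₀)
    have habs : ‖Complex.exp (-(Complex.I * (θ₀:ℂ))) * I₀‖ = ‖I₀‖ := by
      rw [norm_mul]
      have : (-(Complex.I * (θ₀:ℂ))) = ((-θ₀ : ℝ) : ℂ) * Complex.I := by push_cast; ring
      rw [this, Complex.norm_exp_ofReal_mul_I, one_mul]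
    rw [habs] at this
    exact this
  have := key ▸ hre2
  rw [hre] at this
  linarith [hcos]

lemma sparse_geom {α : ℝ} (hα0 : 0 < α) (hα1 : α ≤ 1) (m : ℕ) :
    SparseFamily α 3 ((((Finset.Icc 1 m).image fun j : ℕ => (j:ℝ) ^ (1/α)) : Finset ℝ) : Set ℝ) := by
  set p : ℝ := 1/α with hp
  have hp0 : 0 < p := by positivity
  have hp1 : 1 ≤ p := by rw [hp, le_div_iff₀ hα0]; linarith
  have hpα : p * α = 1 := by rw [hp]; field_simp
  have hmem : ∀ s : ℝ, s ∈ (((Finset.Icc 1 m).image fun j : ℕ => (j:ℝ) ^ p) : Finset ℝ) ↔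
      ∃ j : ℕ, (1 ≤ j ∧ j ≤ m) ∧ (j:ℝ) ^ p = s := by
    intro s; simp [Finset.mem_image, Finset.mem_Icc]
  have hcancel : ∀ j : ℕ, (((j:ℝ) ^ p) ^ α) = (j:ℝ) := by
    intro j
    rw [← Real.rpow_mul (Nat.cast_nonneg j), hpα, Real.rpow_one]
  have hmono : ∀ j k : ℕ, j < k → (j:ℝ) ^ p + 1 ≤ (k:ℝ) ^ p := by
    intro j k hjk
    have h1 : (1:ℝ) ≤ ((k:ℝ) - j) ^ p := by
      have : (1:ℝ) ^ p ≤ ((k:ℝ) - j) ^ p := by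
        apply Real.rpow_le_rpow zero_le_one _ hp0.le
        have : (j:ℝ) + 1 ≤ k := by exact_mod_cast hjk
        linarith
      rwa [Real.one_rpow] at this
    have h2 := rpow_superadd (Nat.cast_nonneg j) (by
      have : (j:ℝ) ≤ k := by exact_mod_cast hjk.le
      linarith : (0:ℝ) ≤ (k:ℝ) - j) hp1
    rw [add_sub_cancel] at h2
    linarith
  constructor
  · intro s hs s' hs' hne
    obtain ⟨j, hj, rfl⟩ := (hmem s).1 hs
    obtain ⟨k, hk, rfl⟩ := (hmem s').1 hs'
    have hjk : j ≠ k := fun h => hne (by rw [h])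
    rcases hjk.lt_or_gt with h | h
    · have := hmono j k h
      rw [abs_sub_comm, abs_of_nonneg (by linarith)]; linarith
    · have := hmono k j h
      rw [abs_of_nonneg (by linarith)]; linarith
  · intro t r hr
    set T : Set ℝ := ((((Finset.Icc 1 m).image fun j : ℕ => (j:ℝ) ^ p) : Finset ℝ) : Set ℝ) with hT
    set S := {s ∈ T | (Set.Ico s (s + 1) ∩ Set.Ioo t (t + r)).Nonempty} with hS
    have hfin : S.Finite :=
      Set.Finite.subset (Finset.finite_toSet _) (fun s hs => hs.1)
    refine ⟨hfin, ?_⟩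
    have hr0 : (0:ℝ) < r := by linarith
    have hrα1 : (1:ℝ) ≤ r ^ α := by
      have : (1:ℝ) ^ α ≤ r ^ α := Real.rpow_le_rpow zero_le_one hr hα0.le
      rwa [Real.one_rpow] at this
    rcases S.eq_empty_or_nonempty with hSe | hSne
    · rw [hSe]; simp; positivity
    · obtain ⟨s₀, hs₀T, y₀, hy₀⟩ := hSne
      obtain ⟨j₀, hj₀, rfl⟩ := (hmem s₀).1 hs₀T
      have hj₀1 : (1:ℝ) ≤ (j₀:ℝ) ^ p := by
        have : (1:ℝ) ^ p ≤ (j₀:ℝ) ^ p :=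
          Real.rpow_le_rpow zero_le_one (by exact_mod_cast hj₀.1) hp0.le
        rwa [Real.one_rpow] at this
      have htr1 : 1 < t + r := lt_of_le_of_lt (le_trans hj₀1 hy₀.1.1) hy₀.2.2
      set u : ℝ := max (t - 1) 0 with hu
      have hu0 : 0 ≤ u := le_max_right _ _
      set A : ℕ := Nat.floor (u ^ α) with hA
      set B : ℕ := Nat.floor ((t + r) ^ α) with hB
      have hsub : S ⊆ (fun j : ℕ => (j:ℝ) ^ p) '' (↑(Finset.Ioc A B) : Set ℕ) := by
        rintro s ⟨hsT, y, ⟨hys, hys1⟩, hyt, hytr⟩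
        obtain ⟨j, hj, rfl⟩ := (hmem s).1 hsT
        have hjp1 : (1:ℝ) ≤ (j:ℝ) ^ p := by
          have : (1:ℝ) ^ p ≤ (j:ℝ) ^ p :=
            Real.rpow_le_rpow zero_le_one (by exact_mod_cast hj.1) hp0.le
          rwa [Real.one_rpow] at this
        refine ⟨j, ?_, rfl⟩
        have hlt : (j:ℝ) ^ p < t + r := lt_of_le_of_lt hys hytr
        have hgt : t - 1 < (j:ℝ) ^ p := by linarith
        have huj : u < (j:ℝ) ^ p := max_lt hgt (by linarith)
        have hjB : j ≤ B := by
          apply Nat.le_floor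
          have h2 : (((j:ℝ) ^ p) ^ α) ≤ ((t + r) ^ α) :=
            Real.rpow_le_rpow (by positivity) hlt.le hα0.le
          rwa [hcancel j] at h2
        have hjA : A < j := by
          have h2 : (u ^ α) < (((j:ℝ) ^ p) ^ α) := Real.rpow_lt_rpow hu0 huj hα0
          rw [hcancel j] at h2
          have hA2 : (A:ℝ) ≤ u ^ α := Nat.floor_le (Real.rpow_nonneg hu0 α)
          exact_mod_cast lt_of_le_of_lt hA2 h2
        simp [Finset.mem_Ioc, hjA, hjB]
      have hcount : (S.ncard : ℝ) ≤ ((B - A : ℕ) : ℝ) := by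
        have h1 : S.ncard ≤ B - A := by
          calc S.ncard ≤ ((fun j : ℕ => (j:ℝ) ^ p) '' (↑(Finset.Ioc A B) : Set ℕ)).ncard :=
                Set.ncard_le_ncard hsub ((Finset.Ioc A B).finite_toSet.image _)
            _ ≤ (↑(Finset.Ioc A B) : Set ℕ).ncard := Set.ncard_image_le (Finset.Ioc A B).finite_toSet
            _ = (Finset.Ioc A B).card := Set.ncard_coe_finset _
            _ = B - A := Nat.card_Ioc A B
        exact_mod_cast h1
      have hBA : ((B - A : ℕ) : ℝ) ≤ 3 * r ^ α := by
        rcases le_or_gt B A with h | h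
        · rw [Nat.sub_eq_zero_of_le h]; simp; positivity
        · rw [Nat.cast_sub h.le]
          have hB2 : (B:ℝ) ≤ (t + r) ^ α :=
            Nat.floor_le (Real.rpow_nonneg (by linarith) α)
          have hA2 : u ^ α < (A:ℝ) + 1 := Nat.lt_floor_add_one _
          have hsub2 : (t + r) ^ α ≤ u ^ α + (1 + r) ^ α := by
            have h3 : t + r ≤ u + (1 + r) := by
              have : t - 1 ≤ u := le_max_left _ _
              linarith
            calc (t + r) ^ α ≤ (u + (1 + r)) ^ α :=
                  Real.rpow_le_rpow (by linarith) h3 hα0.le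
              _ ≤ u ^ α + (1 + r) ^ α := rpow_subadd hu0 (by linarith) hα0.le hα1
          have h1r : (1 + r) ^ α ≤ 2 * r ^ α := by
            calc (1 + r) ^ α ≤ (2 * r) ^ α :=
                  Real.rpow_le_rpow (by linarith) (by linarith) hα0.le
              _ = 2 ^ α * r ^ α := Real.mul_rpow (by norm_num) hr0.le
              _ ≤ 2 * r ^ α := by
                  have : (2:ℝ) ^ α ≤ 2 ^ (1:ℝ) :=
                    Real.rpow_le_rpow_of_exponent_le (by norm_num) hα1
                  rw [Real.rpow_one] at this
                  nlinarith
          linarith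
      exact le_trans hcount hBA




lemma ed_normsq {d : ℕ} (η : Ed d) : ‖η‖^2 = ∑ i, (η i)^2 := by
  have h : ∑ i, ‖η i‖^2 = ∑ i, (η i)^2 := by simp [Real.norm_eq_abs, sq_abs]
  rw [EuclideanSpace.norm_eq, ← h, Real.sq_sqrt (by positivity)]

lemma geom_phase {d : ℕ} (i0 : Fin d) (hd : 1 ≤ d) {δ : ℝ}
    (hδ0 : 0 < δ) (hδ1 : δ ≤ 1)
    (c : ℝ) (hc : c = 1 ∨ c = -1) (ξ : Ed d)
    (h0a : 1 ≤ c * ξ i0) (h0b : c * ξ i0 ≤ 1 + δ^2)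
    (hi : ∀ i, i ≠ i0 → |ξ i| ≤ δ) :
    1 ≤ ‖ξ‖ ∧ ‖ξ‖ ≤ 1 + ((d:ℝ)+2)*δ^2/2 ∧ ‖ξ - EuclideanSpace.single i0 c‖ ≤ (d:ℝ)*δ := by
  have hD1 : (1:ℝ) ≤ (d:ℝ) := by exact_mod_cast hd
  have hcc : c * c = 1 := by rcases hc with rfl | rfl <;> norm_num
  have hsq : (ξ i0)^2 = (c * ξ i0)^2 := by nlinarith [sq_nonneg c]
  have hcard : ((Finset.univ.erase i0).card : ℝ) = (d:ℝ) - 1 := by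
    rw [Finset.card_erase_of_mem (Finset.mem_univ i0), Finset.card_univ, Fintype.card_fin]
    rw [Nat.cast_sub hd]; norm_num
  have herase : ∑ i ∈ Finset.univ.erase i0, (ξ i)^2 ≤ ((d:ℝ) - 1) * δ^2 := by
    calc ∑ i ∈ Finset.univ.erase i0, (ξ i)^2
        ≤ ∑ _i ∈ Finset.univ.erase i0, δ^2 := by
          apply Finset.sum_le_sum
          intro i hi'
          have h := hi i (Finset.ne_of_mem_erase hi')
          calc (ξ i)^2 = |ξ i|^2 := (sq_abs _).symm
            _ ≤ δ^2 := pow_le_pow_left₀ (abs_nonneg _) h 2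
      _ = ((Finset.univ.erase i0).card : ℝ) * δ^2 := by
          rw [Finset.sum_const, nsmul_eq_mul]
      _ = ((d:ℝ) - 1) * δ^2 := by rw [hcard]
  have hsum : ‖ξ‖^2 = (ξ i0)^2 + ∑ i ∈ Finset.univ.erase i0, (ξ i)^2 := by
    rw [ed_normsq, ← Finset.add_sum_erase _ _ (Finset.mem_univ i0)]
  have h1n : 1 ≤ ‖ξ‖ := by
    have h1 : 1 ≤ (ξ i0)^2 := by rw [hsq]; nlinarith
    have h2 : (0:ℝ) ≤ ∑ i ∈ Finset.univ.erase i0, (ξ i)^2 :=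
      Finset.sum_nonneg fun i _ => sq_nonneg _
    nlinarith [norm_nonneg ξ]
  have hub : ‖ξ‖ ≤ 1 + ((d:ℝ)+2)*δ^2/2 := by
    have h1 : (ξ i0)^2 ≤ (1+δ^2)^2 := by rw [hsq]; nlinarith
    have h2 : ‖ξ‖^2 ≤ 1 + ((d:ℝ)+2)*δ^2 := by
      rw [hsum]
      have hδ2 : δ^2 ≤ 1 := by nlinarith
      have hδ4 : δ^4 ≤ δ^2 := by nlinarith
      nlinarith
    nlinarith [norm_nonneg ξ]
  refine ⟨h1n, hub, ?_⟩
  have hsub : ∀ i, (ξ - EuclideanSpace.single i0 c) i = ξ i - (if i = i0 then c else 0) := by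
    intro i
    have : (ξ - EuclideanSpace.single i0 c) i = ξ i - (EuclideanSpace.single i0 c) i := rfl
    rw [this, EuclideanSpace.single_apply]
  have hdsq : ‖ξ - EuclideanSpace.single i0 c‖^2 ≤ δ^4 + ((d:ℝ)-1)*δ^2 := by
    rw [ed_normsq, ← Finset.add_sum_erase _ _ (Finset.mem_univ i0)]
    have e1 : ((ξ - EuclideanSpace.single i0 c) i0)^2 ≤ δ^4 := by
      rw [hsub i0, if_pos rfl]
      have : ξ i0 - c = c * (c * ξ i0 - 1) := by
        rw [mul_sub, ← mul_assoc, hcc, one_mul, mul_one]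
      rw [this]
      have h2 : (c * (c * ξ i0 - 1))^2 = (c*c) * (c * ξ i0 - 1)^2 := by ring
      rw [h2, hcc, one_mul]
      nlinarith
    have e2 : ∑ i ∈ Finset.univ.erase i0, ((ξ - EuclideanSpace.single i0 c) i)^2
        ≤ ((d:ℝ) - 1) * δ^2 := by
      calc ∑ i ∈ Finset.univ.erase i0, ((ξ - EuclideanSpace.single i0 c) i)^2
          = ∑ i ∈ Finset.univ.erase i0, (ξ i)^2 := by
            apply Finset.sum_congr rfl
            intro i hi'
            rw [hsub i, if_neg (Finset.ne_of_mem_erase hi'), sub_zero]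
        _ ≤ ((d:ℝ) - 1) * δ^2 := herase
    linarith
  have : δ^4 + ((d:ℝ)-1)*δ^2 ≤ ((d:ℝ)*δ)^2 := by
    have hδ2 : δ^2 ≤ 1 := by nlinarith
    have hden : (d:ℝ) ≤ (d:ℝ)^2 := by nlinarith
    have hδ4 : δ^4 ≤ δ^2 := by nlinarith
    nlinarith
  nlinarith [norm_nonneg (ξ - EuclideanSpace.single i0 c), mul_nonneg (by linarith : (0:ℝ) ≤ (d:ℝ)) hδ0.le]

lemma phase_bound {d : ℕ} (i0 : Fin d) (hd : 1 ≤ d) {δ ε : ℝ}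
    (hδ0 : 0 < δ) (hδ1 : δ ≤ 1) (hε0 : 0 < ε) (hεph : ε * (3*(d:ℝ)+4) ≤ 1)
    (c : ℝ) (hc : c = 1 ∨ c = -1) (ξ : Ed d)
    (h0a : 1 ≤ c * ξ i0) (h0b : c * ξ i0 ≤ 1 + δ^2) (hi : ∀ i, i ≠ i0 → |ξ i| ≤ δ)
    (x : Ed d) (hx0 : |x i0| ≤ ε/δ^2) (hxi : ∀ i, i ≠ i0 → |x i| ≤ ε/δ)
    (t : ℝ) (ht0 : 0 ≤ t) (ht1 : t ≤ ε/δ^2) :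
    |((inner ℝ x ξ : ℝ) + t*‖ξ‖) - (c * x i0 + t)| ≤ 1/2 := by
  obtain ⟨h1n, hub, -⟩ := geom_phase i0 hd hδ0 hδ1 c hc ξ h0a h0b hi
  have hD1 : (1:ℝ) ≤ (d:ℝ) := by exact_mod_cast hd
  have hcc : c * c = 1 := by rcases hc with rfl | rfl <;> norm_num
  have hinner : (inner ℝ x ξ : ℝ) = ∑ i, x i * ξ i := by
    simp [PiLp.inner_apply, RCLike.inner_apply, conj_trivial, mul_comm]
  have hsplit : (inner ℝ x ξ : ℝ) = x i0 * ξ i0 + ∑ i ∈ Finset.univ.erase i0, x i * ξ i := by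
    rw [hinner, ← Finset.add_sum_erase _ _ (Finset.mem_univ i0)]
  have hS : |∑ i ∈ Finset.univ.erase i0, x i * ξ i| ≤ ((d:ℝ)-1) * ε := by
    calc |∑ i ∈ Finset.univ.erase i0, x i * ξ i| ≤ ∑ i ∈ Finset.univ.erase i0, |x i * ξ i| :=
          Finset.abs_sum_le_sum_abs _ _
      _ ≤ ∑ _i ∈ Finset.univ.erase i0, ε := by
          apply Finset.sum_le_sum
          intro i hi'
          have hne := Finset.ne_of_mem_erase hi'
          rw [abs_mul]
          calc |x i| * |ξ i| ≤ (ε/δ) * δ :=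
                mul_le_mul (hxi i hne) (hi i hne) (abs_nonneg _) (by positivity)
            _ = ε := by field_simp
      _ = ((Finset.univ.erase i0).card : ℝ) * ε := by rw [Finset.sum_const, nsmul_eq_mul]
      _ = ((d:ℝ)-1) * ε := by
          rw [Finset.card_erase_of_mem (Finset.mem_univ i0), Finset.card_univ, Fintype.card_fin,
            Nat.cast_sub hd]
          norm_num
  have h01 : |x i0 * (ξ i0 - c)| ≤ ε := by
    rw [abs_mul]
    have h2 : |ξ i0 - c| ≤ δ^2 := by
      have h3 : ξ i0 - c = c * (c * ξ i0 - 1) := by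
        rw [mul_sub, ← mul_assoc, hcc, one_mul, mul_one]
      rw [h3, abs_mul]
      have hc1 : |c| = 1 := by rcases hc with rfl | rfl <;> norm_num
      rw [hc1, one_mul, abs_of_nonneg (by linarith)]
      linarith
    calc |x i0| * |ξ i0 - c| ≤ (ε/δ^2) * δ^2 :=
          mul_le_mul hx0 h2 (abs_nonneg _) (by positivity)
      _ = ε := by field_simp
  have hT : |t * (‖ξ‖ - 1)| ≤ ε * ((d:ℝ)+2)/2 := by
    rw [abs_mul, abs_of_nonneg ht0, abs_of_nonneg (by linarith)]
    calc t * (‖ξ‖-1) ≤ (ε/δ^2) * (((d:ℝ)+2)*δ^2/2) := by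
          apply mul_le_mul ht1 (by linarith) (by linarith) (by positivity)
      _ = ε * ((d:ℝ)+2)/2 := by field_simp
  have heq : ((inner ℝ x ξ : ℝ) + t*‖ξ‖) - (c * x i0 + t)
      = x i0 * (ξ i0 - c) + (∑ i ∈ Finset.univ.erase i0, x i * ξ i) + t * (‖ξ‖ - 1) := by
    rw [hsplit]; ring
  rw [heq]
  have t1 := abs_add_le (x i0 * (ξ i0 - c) + ∑ i ∈ Finset.univ.erase i0, x i * ξ i) (t * (‖ξ‖ - 1))
  have t2 := abs_add_le (x i0 * (ξ i0 - c)) (∑ i ∈ Finset.univ.erase i0, x i * ξ i)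
  linarith

lemma prod_ite_enn {d : ℕ} (i0 : Fin d) (u v : ℝ≥0∞) :
    (∏ i : Fin d, if i = i0 then u else v) = u * v ^ (d - 1) := by
  rw [← Finset.mul_prod_erase Finset.univ _ (Finset.mem_univ i0)]
  rw [if_pos rfl]
  congr 1
  rw [Finset.prod_congr rfl (fun i hi => if_neg (Finset.ne_of_mem_erase hi)), Finset.prod_const,
    Finset.card_erase_of_mem (Finset.mem_univ i0), Finset.card_univ, Fintype.card_fin]

lemma ebox_vol_ite {d : ℕ} (i0 : Fin d) (a b : Fin d → ℝ) (w0 w1 : ℝ) (hw0 : 0 ≤ w0)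
    (hw1 : 0 ≤ w1) (h : ∀ i, b i - a i = if i = i0 then w0 else w1) :
    volume (EBox a b) = ENNReal.ofReal (w0 * w1 ^ (d - 1)) := by
  rw [ebox_vol]
  rw [Finset.prod_congr rfl (fun i _ => by rw [h i, apply_ite ENNReal.ofReal])]
  rw [prod_ite_enn, ← ENNReal.ofReal_pow hw1, ← ENNReal.ofReal_mul hw0]

lemma rpow_nat_gap {a : ℝ} (ha : 1 ≤ a) {j k : ℕ} (hjk : j < k) :
    (j:ℝ) ^ a + 1 ≤ (k:ℝ) ^ a := by
  have h1 : (1:ℝ) ≤ ((k:ℝ) - j) ^ a := by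
    have h : (1:ℝ) ^ a ≤ ((k:ℝ) - j) ^ a := by
      apply Real.rpow_le_rpow zero_le_one _ (by linarith)
      have : (j:ℝ) + 1 ≤ k := by exact_mod_cast hjk
      linarith
    rwa [Real.one_rpow] at h
  have h2 := rpow_superadd (Nat.cast_nonneg j) (by
    have : (j:ℝ) ≤ k := by exact_mod_cast hjk.le
    linarith : (0:ℝ) ≤ (k:ℝ) - j) ha
  rw [add_sub_cancel] at h2
  linarith

/-- necessity of `q ≥ 2(d+1+2α)/(d+1)` for the sparse bilinear cone
estimate with angularly separated supports. -/
theorem stmt12 (d : ℕ) (hd : 2 ≤ d) (α q : ℝ) (hα0 : 0 < α) (hα1 : α ≤ 1)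
    (hq : 0 < q) :
    ∃ C₀ : ℝ, 0 < C₀ ∧
      ∀ C : ℝ,
        (∀ T : Set ℝ, SparseFamily α C₀ T →
          ∀ f g : Ed d → ℂ, MemLp f 2 volume → MemLp g 2 volume →
            Function.support f ⊆
              {ξ | ξ ∈ ann d 1 ∧
                ‖‖ξ‖⁻¹ • ξ - EuclideanSpace.single (⟨0, by omega⟩ : Fin d) (1 : ℝ)‖ ≤ 1 / 2} →
            Function.support g ⊆
              {ξ | ξ ∈ ann d 1 ∧
                ‖‖ξ‖⁻¹ • ξ + EuclideanSpace.single (⟨0, by omega⟩ : Fin d) (1 : ℝ)‖ ≤ 1 / 2} →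
            (∫⁻ t in ⋃ s ∈ T, Set.Ico s (s + 1),
                ∫⁻ x, (‖extOp f x t * extOp g x t‖₊ : ℝ≥0∞) ^ (q / 2) ∂volume ∂volume)
                ^ (2 / q)
              ≤ ENNReal.ofReal C * (eLpNorm f 2 volume * eLpNorm g 2 volume)) →
        2 * ((d : ℝ) + 1 + 2 * α) / ((d : ℝ) + 1) ≤ q := by
  classical
  have hd1 : 1 ≤ d := by omega
  refine ⟨3, by norm_num, ?_⟩
  intro C hC
  by_contra hcon
  push_neg at hcon
  set i0 : Fin d := (⟨0, by omega⟩ : Fin d) with hi0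
  set D : ℝ := (d : ℝ) with hD
  have hD2 : (2:ℝ) ≤ D := by rw [hD]; exact_mod_cast hd
  set ε : ℝ := 1/(4*(D+1)) with hεdef
  have hε0 : 0 < ε := by rw [hεdef]; positivity
  have hε1 : ε ≤ 1 := by rw [hεdef, div_le_one (by linarith)]; linarith
  have hεph : ε * (3*D+4) ≤ 1 := by
    rw [hεdef, div_mul_eq_mul_div, div_le_one (by linarith)]; linarith
  have hεD : (D+2) * ε ≤ 1 := by
    rw [hεdef, mul_one_div, div_le_one (by linarith)]; linarith
  have hεD14 : (D+1) * ε = 1/4 := by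
    rw [hεdef]; field_simp
  set C' : ℝ := max C 0 with hC'def
  have hC'0 : 0 ≤ C' := le_max_right _ _
  have hq2 : (0:ℝ) < 2/q := by positivity
  set ee : ℝ := (D+1) - (2/q)*(2*α+D+1) with heedef
  have hee0 : ee < 0 := by
    have h1 : (0:ℝ) < D + 1 := by linarith
    have h2 : q * (D+1) < 2*(D+1+2*α) := by
      rw [lt_div_iff₀ h1] at hcon; linarith
    have h3 : ee * q = (D+1)*q - 2*(2*α+D+1) := by
      rw [heedef]; field_simp
    by_contra hee
    push_neg at hee
    have h4 : 0 ≤ ee * q := mul_nonneg hee hq.le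
    rw [h3] at h4; linarith
  set K : ℝ := ((1/2)*((ε/2)^α)*((2*ε)^d))^(2/q) * 2^(d-1) with hKdef
  have hK0 : 0 < K := by
    rw [hKdef]
    have h1 : (0:ℝ) < (ε/2)^α := Real.rpow_pos_of_pos (by linarith) _
    positivity
  have main : ∀ δ : ℝ, 0 < δ → δ ≤ ε → δ^2 ≤ ε/2 → δ^(2*α) ≤ ((ε/2)^α)/2 →
      K * δ ^ ee ≤ 4*C' := by
    intro δ hδ0 hδε hδsq hδα
    have hδ1 : δ ≤ 1 := hδε.trans hε1
    -- the boxes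
    set aτ : Fin d → ℝ := fun i => if i = i0 then 1 else -δ with haτ
    set bτ : Fin d → ℝ := fun i => if i = i0 then 1+δ^2 else δ with hbτ
    set aσ : Fin d → ℝ := fun i => if i = i0 then -1-δ^2 else -δ with haσ
    set bσ : Fin d → ℝ := fun i => if i = i0 then -1 else δ with hbσ
    set aX : Fin d → ℝ := fun i => if i = i0 then -(ε/δ^2) else -(ε/δ) with haX
    set bX : Fin d → ℝ := fun i => if i = i0 then ε/δ^2 else ε/δ with hbX
    have haτ0 : aτ i0 = 1 := if_pos rfl
    have hbτ0 : bτ i0 = 1 + δ^2 := if_pos rfl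
    have haτn : ∀ i, i ≠ i0 → aτ i = -δ := fun i h => if_neg h
    have hbτn : ∀ i, i ≠ i0 → bτ i = δ := fun i h => if_neg h
    have haσ0 : aσ i0 = -1-δ^2 := if_pos rfl
    have hbσ0 : bσ i0 = -1 := if_pos rfl
    have haσn : ∀ i, i ≠ i0 → aσ i = -δ := fun i h => if_neg h
    have hbσn : ∀ i, i ≠ i0 → bσ i = δ := fun i h => if_neg h
    have haX0 : aX i0 = -(ε/δ^2) := if_pos rfl
    have hbX0 : bX i0 = ε/δ^2 := if_pos rfl
    have haXn : ∀ i, i ≠ i0 → aX i = -(ε/δ) := fun i h => if_neg h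
    have hbXn : ∀ i, i ≠ i0 → bX i = ε/δ := fun i h => if_neg h
    set vr : ℝ := δ^2 * (2*δ)^(d-1) with hvrdef
    have hvr0 : 0 < vr := by rw [hvrdef]; positivity
    set VXr : ℝ := (2*(ε/δ^2)) * (2*(ε/δ))^(d-1) with hVXdef
    have hVX0 : 0 < VXr := by rw [hVXdef]; positivity
    have hvolτ : volume (EBox aτ bτ) = ENNReal.ofReal vr := by
      rw [ebox_vol_ite i0 aτ bτ (δ^2) (2*δ) (by positivity) (by positivity)]
      intro i
      by_cases h : i = i0
      · rw [h, haτ0, hbτ0, if_pos rfl]; ring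
      · rw [haτn i h, hbτn i h, if_neg h]; ring
    have hvolσ : volume (EBox aσ bσ) = ENNReal.ofReal vr := by
      rw [ebox_vol_ite i0 aσ bσ (δ^2) (2*δ) (by positivity) (by positivity)]
      intro i
      by_cases h : i = i0
      · rw [h, haσ0, hbσ0, if_pos rfl]; ring
      · rw [haσn i h, hbσn i h, if_neg h]; ring
    have hvolX : volume (EBox aX bX) = ENNReal.ofReal VXr := by
      rw [ebox_vol_ite i0 aX bX (2*(ε/δ^2)) (2*(ε/δ)) (by positivity) (by positivity)]
      intro i
      by_cases h : i = i0
      · rw [h, haX0, hbX0, if_pos rfl]; ring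
      · rw [haXn i h, hbXn i h, if_neg h]; ring
    -- membership facts
    have hmemτ : ∀ ξ ∈ EBox aτ bτ, (1 ≤ 1 * ξ i0 ∧ 1 * ξ i0 ≤ 1 + δ^2) ∧
        ∀ i, i ≠ i0 → |ξ i| ≤ δ := by
      intro ξ hξ
      constructor
      · have h := hξ i0
        rw [haτ0, hbτ0] at h
        rw [one_mul]
        exact ⟨h.1, h.2⟩
      · intro i hne
        have h := hξ i
        rw [haτn i hne, hbτn i hne] at h
        rw [abs_le]
        exact ⟨h.1, h.2⟩
    have hmemσ : ∀ ξ ∈ EBox aσ bσ, (1 ≤ (-1) * ξ i0 ∧ (-1) * ξ i0 ≤ 1 + δ^2) ∧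
        ∀ i, i ≠ i0 → |ξ i| ≤ δ := by
      intro ξ hξ
      constructor
      · have h := hξ i0
        rw [haσ0, hbσ0] at h
        obtain ⟨ha, hb⟩ := h
        constructor
        · linarith
        · linarith
      · intro i hne
        have h := hξ i
        rw [haσn i hne, hbσn i hne] at h
        rw [abs_le]
        exact ⟨h.1, h.2⟩
    have hmemX : ∀ x ∈ EBox aX bX, |x i0| ≤ ε/δ^2 ∧ ∀ i, i ≠ i0 → |x i| ≤ ε/δ := by
      intro x hx
      constructor
      · have h := hx i0
        rw [haX0, hbX0] at h
        rw [abs_le]; exact ⟨h.1, h.2⟩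
      · intro i hne
        have h := hx i
        rw [haXn i hne, hbXn i hne] at h
        rw [abs_le]; exact ⟨h.1, h.2⟩
    -- support conditions
    set f : Ed d → ℂ := (EBox aτ bτ).indicator (fun _ => (1:ℂ)) with hf
    set g : Ed d → ℂ := (EBox aσ bσ).indicator (fun _ => (1:ℂ)) with hg
    have hMf : MemLp f 2 volume := by
      rw [hf]
      exact memLp_indicator_const 2 (ebox_meas _ _) _ (Or.inr (by
        rw [hvolτ]; exact ENNReal.ofReal_ne_top))
    have hMg : MemLp g 2 volume := by
      rw [hg]
      exact memLp_indicator_const 2 (ebox_meas _ _) _ (Or.inr (by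
        rw [hvolσ]; exact ENNReal.ofReal_ne_top))
    -- geometry: annulus and cap conditions
    have hgeom : ∀ (c : ℝ), (c = 1 ∨ c = -1) → ∀ ξ : Ed d, 1 ≤ c * ξ i0 → c * ξ i0 ≤ 1 + δ^2 →
        (∀ i, i ≠ i0 → |ξ i| ≤ δ) →
        ξ ∈ ann d 1 ∧ ‖‖ξ‖⁻¹ • ξ - EuclideanSpace.single i0 c‖ ≤ 1/2 := by
      intro c hc ξ h0a h0b hi
      obtain ⟨h1n, hub, hdist⟩ := geom_phase i0 hd1 hδ0 hδ1 c hc ξ h0a h0b hi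
      have hDδ : (D+2)*δ^2 ≤ δ := by
        have h1 : (D+2)*δ ≤ 1 := by
          calc (D+2)*δ ≤ (D+2)*ε := by
                apply mul_le_mul_of_nonneg_left hδε (by linarith)
            _ ≤ 1 := hεD
        nlinarith
      constructor
      · constructor
        · linarith
        · have h8 : ‖ξ‖ ≤ 1 + δ/2 := by linarith
          linarith
      · have hnp : (0:ℝ) < ‖ξ‖ := by linarith
        have htri : ‖‖ξ‖⁻¹ • ξ - EuclideanSpace.single i0 c‖ ≤
            ‖‖ξ‖⁻¹ • ξ - ξ‖ + ‖ξ - EuclideanSpace.single i0 c‖ := by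
          have h := dist_triangle (‖ξ‖⁻¹ • ξ) ξ (EuclideanSpace.single i0 c)
          simpa [dist_eq_norm] using h
        have hsm : ‖‖ξ‖⁻¹ • ξ - ξ‖ = ‖ξ‖ - 1 := by
          have h2 : ‖ξ‖⁻¹ • ξ - ξ = (‖ξ‖⁻¹ - 1) • ξ := by rw [sub_smul, one_smul]
          rw [h2, norm_smul, Real.norm_eq_abs]
          have h3 : ‖ξ‖⁻¹ - 1 = (1 - ‖ξ‖)/‖ξ‖ := by field_simp
          rw [h3, abs_div, abs_of_pos hnp, div_mul_cancel₀ _ hnp.ne']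
          rw [abs_of_nonpos (by linarith)]
          ring
        have h4 : ‖ξ‖ - 1 ≤ δ/2 := by nlinarith
        have h5 : D*δ ≤ D*ε := mul_le_mul_of_nonneg_left hδε (by linarith)
        have h6 : D*ε + ε ≤ 1/4 := by rw [← hεD14]; ring_nf; linarith [hεD14]
        have h7 : δ/2 ≤ ε/2 := by linarith
        rw [hsm] at htri
        calc ‖‖ξ‖⁻¹ • ξ - EuclideanSpace.single i0 c‖ ≤ (‖ξ‖ - 1) + D*δ :=
              le_trans htri (by linarith)
          _ ≤ 1/2 := by linarith
    have hsuppf : Function.support f ⊆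
        {ξ | ξ ∈ ann d 1 ∧ ‖‖ξ‖⁻¹ • ξ - EuclideanSpace.single i0 (1:ℝ)‖ ≤ 1/2} := by
      refine subset_trans Set.support_indicator_subset ?_
      intro ξ hξ
      obtain ⟨⟨h0a, h0b⟩, hi⟩ := hmemτ ξ hξ
      exact hgeom 1 (Or.inl rfl) ξ h0a h0b hi
    have hsuppg : Function.support g ⊆
        {ξ | ξ ∈ ann d 1 ∧ ‖‖ξ‖⁻¹ • ξ + EuclideanSpace.single i0 (1:ℝ)‖ ≤ 1/2} := by
      refine subset_trans Set.support_indicator_subset ?_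
      intro ξ hξ
      obtain ⟨⟨h0a, h0b⟩, hi⟩ := hmemσ ξ hξ
      have h := hgeom (-1) (Or.inr rfl) ξ h0a h0b hi
      have hneg : EuclideanSpace.single i0 (-1:ℝ) = -EuclideanSpace.single i0 (1:ℝ) := by
        ext j
        have h1 : EuclideanSpace.single i0 (-1:ℝ) j = if j = i0 then (-1:ℝ) else 0 :=
          EuclideanSpace.single_apply _ _ _
        have h2 : (-EuclideanSpace.single i0 (1:ℝ)) j = -(EuclideanSpace.single i0 (1:ℝ) j) := rfl
        rw [h1, h2, EuclideanSpace.single_apply]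
        split_ifs <;> norm_num
      refine ⟨h.1, ?_⟩
      have h3 := h.2
      rw [hneg, sub_neg_eq_add] at h3
      exact h3
    -- the sparse family
    set L : ℝ := ε/δ^2 - 1 with hLdef
    have hεδ2 : (2:ℝ) ≤ ε/δ^2 := by
      rw [le_div_iff₀ (by positivity)]; linarith
    have hL1 : 1 ≤ L := by rw [hLdef]; linarith
    set m : ℕ := Nat.floor (L ^ α) with hmdef
    set Tfin : Finset ℝ := (Finset.Icc 1 m).image (fun j : ℕ => (j:ℝ) ^ (1/α)) with hTdef
    have hsparse : SparseFamily α 3 (↑Tfin : Set ℝ) := sparse_geom hα0 hα1 m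
    have hp1 : (1:ℝ) ≤ 1/α := by rw [le_div_iff₀ hα0]; linarith
    have hαp : α * (1/α) = 1 := by field_simp
    have hTbnd : ∀ s ∈ Tfin, 1 ≤ s ∧ s ≤ L := by
      intro s hs
      rw [hTdef, Finset.mem_image] at hs
      obtain ⟨j, hj, rfl⟩ := hs
      rw [Finset.mem_Icc] at hj
      constructor
      · have h : (1:ℝ) ^ (1/α) ≤ (j:ℝ) ^ (1/α) :=
          Real.rpow_le_rpow zero_le_one (by exact_mod_cast hj.1) (by positivity)
        rwa [Real.one_rpow] at h
      · have h1 : (j:ℝ) ≤ (m:ℝ) := by exact_mod_cast hj.2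
        have h2 : (m:ℝ) ≤ L ^ α := Nat.floor_le (Real.rpow_nonneg (by linarith) _)
        calc (j:ℝ) ^ (1/α) ≤ (L ^ α) ^ (1/α) :=
              Real.rpow_le_rpow (Nat.cast_nonneg j) (le_trans h1 h2) (by positivity)
          _ = L := by
              rw [← Real.rpow_mul (by linarith), hαp, Real.rpow_one]
    -- key application of the hypothesis
    have hkey := hC (↑Tfin : Set ℝ) hsparse f g hMf hMg hsuppf hsuppg
    -- lower bound for the left-hand side
    have hoscf : ∀ x ∈ EBox aX bX, ∀ t : ℝ, 0 ≤ t → t ≤ ε/δ^2 → vr/2 ≤ ‖extOp f x t‖ := by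
      intro x hx t ht0 ht1
      obtain ⟨hx0, hxi⟩ := hmemX x hx
      have hform : extOp f x t =
          ∫ ξ : Ed d, Complex.exp (Complex.I * ((((inner ℝ x ξ : ℝ) + t*‖ξ‖ : ℝ)):ℂ)) *
            (EBox aτ bτ).indicator (fun _ => (1:ℂ)) ξ := by
        rw [hf]
        unfold extOp
        congr 1
        funext ξ
        norm_cast
      have hφ : Continuous fun ξ : Ed d => (inner ℝ x ξ : ℝ) + t*‖ξ‖ :=
        (continuous_const.inner continuous_id).add (continuous_const.mul continuous_norm)
      have hb : ∀ ξ ∈ EBox aτ bτ, |((inner ℝ x ξ : ℝ) + t*‖ξ‖) - (1 * x i0 + t)| ≤ 1/2 := by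
        intro ξ hξ
        obtain ⟨⟨h0a, h0b⟩, hi⟩ := hmemτ ξ hξ
        exact phase_bound i0 hd1 hδ0 hδ1 hε0 (by rw [hD] at hεph; exact hεph) 1 (Or.inl rfl)
          ξ h0a h0b hi x hx0 hxi t ht0 ht1
      have h := osc_lower (ebox_meas aτ bτ) (ebox_compact aτ bτ) hφ hb
      rw [hvolτ, ENNReal.toReal_ofReal hvr0.le] at h
      rw [hform]
      exact h
    have hoscg : ∀ x ∈ EBox aX bX, ∀ t : ℝ, 0 ≤ t → t ≤ ε/δ^2 → vr/2 ≤ ‖extOp g x t‖ := by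
      intro x hx t ht0 ht1
      obtain ⟨hx0, hxi⟩ := hmemX x hx
      have hform : extOp g x t =
          ∫ ξ : Ed d, Complex.exp (Complex.I * ((((inner ℝ x ξ : ℝ) + t*‖ξ‖ : ℝ)):ℂ)) *
            (EBox aσ bσ).indicator (fun _ => (1:ℂ)) ξ := by
        rw [hg]
        unfold extOp
        congr 1
        funext ξ
        norm_cast
      have hφ : Continuous fun ξ : Ed d => (inner ℝ x ξ : ℝ) + t*‖ξ‖ :=
        (continuous_const.inner continuous_id).add (continuous_const.mul continuous_norm)
      have hb : ∀ ξ ∈ EBox aσ bσ, |((inner ℝ x ξ : ℝ) + t*‖ξ‖) - ((-1) * x i0 + t)| ≤ 1/2 := by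
        intro ξ hξ
        obtain ⟨⟨h0a, h0b⟩, hi⟩ := hmemσ ξ hξ
        exact phase_bound i0 hd1 hδ0 hδ1 hε0 (by rw [hD] at hεph; exact hεph) (-1) (Or.inr rfl)
          ξ h0a h0b hi x hx0 hxi t ht0 ht1
      have h := osc_lower (ebox_meas aσ bσ) (ebox_compact aσ bσ) hφ hb
      rw [hvolσ, ENNReal.toReal_ofReal hvr0.le] at h
      rw [hform]
      exact h
    -- time set facts
    have hsep := hsparse.1
    have hdisj : (↑Tfin : Set ℝ).PairwiseDisjoint (fun s => Set.Ico s (s+1)) := by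
      intro a ha b hb hab
      have h1 := hsep a ha b hb hab
      simp only [Function.onFun]
      rw [Set.Ico_disjoint_Ico]
      rcases le_or_gt a b with h | h
      · rw [abs_sub_comm, abs_of_nonneg (by linarith only [h])] at h1
        calc min (a+1) (b+1) ≤ a + 1 := min_le_left _ _
          _ ≤ b := by linarith only [h1]
          _ ≤ max a b := le_max_right _ _
      · rw [abs_of_nonneg (by linarith only [h])] at h1
        calc min (a+1) (b+1) ≤ b + 1 := min_le_right _ _
          _ ≤ a := by linarith only [h1]
          _ ≤ max a b := le_max_left _ _
    have hinj : Set.InjOn (fun j : ℕ => (j:ℝ) ^ (1/α)) ↑(Finset.Icc 1 m) := by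
      intro j _ k _ hEq
      by_contra hne
      rcases Nat.lt_or_ge j k with h | h
      · have := rpow_nat_gap hp1 h
        simp only at hEq
        rw [hEq] at this
        linarith only [this]
      · have h2 : k < j := by omega
        have := rpow_nat_gap hp1 h2
        simp only at hEq
        rw [hEq] at this
        linarith only [this]
    have hcardT : Tfin.card = m := by
      rw [hTdef, Finset.card_image_of_injOn hinj, Nat.card_Icc]
      omega
    have hvolΓ : volume (⋃ s ∈ (↑Tfin : Set ℝ), Set.Ico s (s+1)) = (m : ℝ≥0∞) := by
      rw [Finset.set_biUnion_coe, measure_biUnion_finset hdisj (fun s _ => measurableSet_Ico)]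
      have h1 : ∀ s ∈ Tfin, volume (Set.Ico s (s+1)) = 1 := by
        intro s _
        rw [Real.volume_Ico]
        norm_num
      rw [Finset.sum_congr rfl h1, Finset.sum_const, hcardT, nsmul_eq_mul, mul_one]
    have hΓmeas : MeasurableSet (⋃ s ∈ (↑Tfin : Set ℝ), Set.Ico s (s+1)) :=
      Set.Finite.measurableSet_biUnion (Tfin.finite_toSet) (fun _ _ => measurableSet_Ico)
    -- lower bound for inner integral
    set cP : ℝ≥0∞ := ENNReal.ofReal ((vr/2*(vr/2))^(q/2)) with hcP
    have hinnerlow : ∀ t : ℝ, 0 ≤ t → t ≤ ε/δ^2 →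
        cP * ENNReal.ofReal VXr ≤
          ∫⁻ x, (‖extOp f x t * extOp g x t‖₊ : ℝ≥0∞) ^ (q / 2) ∂volume := by
      intro t ht0 ht1
      have hpt : ∀ x ∈ EBox aX bX,
          cP ≤ (‖extOp f x t * extOp g x t‖₊ : ℝ≥0∞) ^ (q / 2) := by
        intro x hx
        have h1 := hoscf x hx t ht0 ht1
        have h2 := hoscg x hx t ht0 ht1
        have h3 : vr/2*(vr/2) ≤ ‖extOp f x t * extOp g x t‖ := by
          rw [norm_mul]
          exact mul_le_mul h1 h2 (by linarith only [hvr0]) (norm_nonneg _)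
        rw [hcP]
        calc ENNReal.ofReal ((vr/2*(vr/2))^(q/2)) ≤
              ENNReal.ofReal ((‖extOp f x t * extOp g x t‖)^(q/2)) := by
              apply ENNReal.ofReal_le_ofReal
              exact Real.rpow_le_rpow (by positivity) h3 (by positivity)
          _ = (‖extOp f x t * extOp g x t‖₊ : ℝ≥0∞) ^ (q / 2) := by
              rw [← ENNReal.ofReal_rpow_of_nonneg (norm_nonneg _) (by positivity),
                ofReal_norm, enorm_eq_nnnorm]
      calc cP * ENNReal.ofReal VXr = ∫⁻ _x in EBox aX bX, cP ∂volume := by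
            rw [setLIntegral_const, hvolX]
        _ ≤ ∫⁻ x in EBox aX bX, (‖extOp f x t * extOp g x t‖₊ : ℝ≥0∞) ^ (q / 2) ∂volume :=
            setLIntegral_mono' (ebox_meas _ _) hpt
        _ ≤ ∫⁻ x, (‖extOp f x t * extOp g x t‖₊ : ℝ≥0∞) ^ (q / 2) ∂volume :=
            setLIntegral_le_lintegral _ _
    have hlow : cP * ENNReal.ofReal VXr * (m : ℝ≥0∞) ≤
        ∫⁻ t in ⋃ s ∈ (↑Tfin : Set ℝ), Set.Ico s (s+1),
          ∫⁻ x, (‖extOp f x t * extOp g x t‖₊ : ℝ≥0∞) ^ (q / 2) ∂volume ∂volume := by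
      calc cP * ENNReal.ofReal VXr * (m : ℝ≥0∞)
          = ∫⁻ _t in ⋃ s ∈ (↑Tfin : Set ℝ), Set.Ico s (s+1), (cP * ENNReal.ofReal VXr) ∂volume := by
            rw [setLIntegral_const, hvolΓ]
        _ ≤ _ := by
            apply setLIntegral_mono' hΓmeas
            intro t ht
            simp only [Set.mem_iUnion] at ht
            obtain ⟨s, hs, hts⟩ := ht
            obtain ⟨hs1, hsL⟩ := hTbnd s hs
            have ht0 : 0 ≤ t := le_trans (by linarith only [hs1]) hts.1
            have ht1 : t ≤ ε/δ^2 := by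
              have h9 := hts.2
              rw [hLdef] at hsL
              linarith only [h9, hsL]
            exact hinnerlow t ht0 ht1
    -- eLpNorm computation
    have help : eLpNorm f 2 volume * eLpNorm g 2 volume = ENNReal.ofReal vr := by
      rw [hf, hg, eLpNorm_indicator_const (ebox_meas _ _) two_ne_zero ENNReal.ofNat_ne_top,
        eLpNorm_indicator_const (ebox_meas _ _) two_ne_zero ENNReal.ofNat_ne_top,
        hvolτ, hvolσ]
      have h1 : ‖(1:ℂ)‖ₑ = 1 := by simp
      rw [h1]
      simp only [ENNReal.coe_one, one_mul]
      rw [← ENNReal.rpow_add _ _ (by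
          simp only [ne_eq, ENNReal.ofReal_eq_zero, not_le]
          linarith only [hvr0]) ENNReal.ofReal_ne_top]
      have h2 : (1 / (2:ℝ≥0∞).toReal + 1 / (2:ℝ≥0∞).toReal) = 1 := by
        rw [ENNReal.toReal_ofNat]; norm_num
      rw [h2, ENNReal.rpow_one]
    -- assemble the inequality in ℝ≥0∞ and convert to ℝ
    have hC'bound : ENNReal.ofReal C * (eLpNorm f 2 volume * eLpNorm g 2 volume) ≤
        ENNReal.ofReal (C' * vr) := by
      rw [help, ENNReal.ofReal_mul hC'0]
      exact mul_le_mul_left (ENNReal.ofReal_le_ofReal (le_max_left _ _)) _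
    have hennreal : ENNReal.ofReal (((vr/2*(vr/2))^(q/2) * VXr * m) ^ (2/q)) ≤
        ENNReal.ofReal (C' * vr) := by
      have h1 : ENNReal.ofReal ((vr/2*(vr/2))^(q/2) * VXr * m) = cP * ENNReal.ofReal VXr * (m:ℝ≥0∞) := by
        rw [ENNReal.ofReal_mul (by positivity), ENNReal.ofReal_mul (by positivity), hcP,
          ENNReal.ofReal_natCast]
      rw [← ENNReal.ofReal_rpow_of_nonneg (by positivity) hq2.le, h1]
      calc (cP * ENNReal.ofReal VXr * (m:ℝ≥0∞)) ^ (2/q)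
          ≤ (∫⁻ t in ⋃ s ∈ (↑Tfin : Set ℝ), Set.Ico s (s+1),
              ∫⁻ x, (‖extOp f x t * extOp g x t‖₊ : ℝ≥0∞) ^ (q / 2) ∂volume ∂volume) ^ (2/q) :=
            ENNReal.rpow_le_rpow hlow hq2.le
        _ ≤ ENNReal.ofReal C * (eLpNorm f 2 volume * eLpNorm g 2 volume) := hkey
        _ ≤ ENNReal.ofReal (C' * vr) := hC'bound
    have hreal : ((vr/2*(vr/2))^(q/2) * VXr * m) ^ (2/q) ≤ C' * vr :=
      (ENNReal.ofReal_le_ofReal_iff (by positivity)).1 hennreal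
    -- real algebra
    have hsplit2 : ((vr/2*(vr/2))^(q/2) * VXr * m) ^ (2/q)
        = (vr/2*(vr/2)) * (VXr * m) ^ (2/q) := by
      rw [mul_assoc, Real.mul_rpow (by positivity) (by positivity)]
      congr 1
      rw [← Real.rpow_mul (by positivity)]
      have : (q/2) * (2/q) = 1 := by field_simp
      rw [this, Real.rpow_one]
    rw [hsplit2] at hreal
    set W : ℝ := (VXr * m) ^ (2/q) with hW
    have hW0 : 0 ≤ W := Real.rpow_nonneg (by positivity) _
    have hfinal : W * vr ≤ 4*C' := by nlinarith only [hreal, hvr0, hW0]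
    -- now plug in the lower bounds
    have hml : (1/2)*(ε/2)^α * δ^(-(2*α)) ≤ (m:ℝ) := by
      have hLl : (ε/2)/δ^2 ≤ L := by
        rw [hLdef]
        have h1 : ε/δ^2 - ε/δ^2/2 = (ε/2)/δ^2 := by field_simp; ring
        linarith only [hεδ2, h1]
      have hLα : (ε/2)^α * δ^(-(2*α)) ≤ L ^ α := by
        have h1 : ((ε/2)/δ^2) ^ α = (ε/2)^α * δ^(-(2*α)) := by
          rw [Real.div_rpow (by linarith) (by positivity)]
          have h2 : ((δ^2:ℝ))^α = δ^(2*α) := by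
            rw [← Real.rpow_natCast δ 2, ← Real.rpow_mul hδ0.le]
            norm_num
          rw [h2, Real.rpow_neg hδ0.le, div_eq_mul_inv]
        rw [← h1]
        exact Real.rpow_le_rpow (by positivity) hLl hα0.le
      have hm1 : L ^ α - 1 ≤ (m:ℝ) := by
        have := Nat.lt_floor_add_one (L ^ α)
        rw [← hmdef] at this
        linarith only [this]
      have h2 : 2 ≤ (ε/2)^α * δ^(-(2*α)) := by
        have hpos : (0:ℝ) < δ^(2*α) := Real.rpow_pos_of_pos hδ0 _
        rw [Real.rpow_neg hδ0.le, ← div_eq_mul_inv, le_div_iff₀ hpos]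
        linarith only [hδα]
      linarith only [hLα, hm1, h2]
    have hVXreq : VXr = (2*ε)^d * δ^(-(D+1)) := by
      rw [hVXdef]
      have h1 : 2*(ε/δ^2) = (2*ε) * δ^(-(2:ℝ)) := by
        rw [Real.rpow_neg hδ0.le, ← Real.rpow_natCast δ 2]
        push_cast
        field_simp
      have h2 : (2*(ε/δ))^(d-1) = (2*ε)^(d-1) * (δ^(-(1:ℝ)))^(d-1) := by
        rw [← mul_pow]
        congr 1
        rw [Real.rpow_neg_one]
        field_simp
      rw [h1, h2]
      have h3 : (δ^(-(1:ℝ)))^(d-1) = δ^(-(1:ℝ) * (d-1 : ℕ)) := by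
        rw [Real.rpow_mul_natCast hδ0.le]
      rw [h3]
      have h4 : (2*ε) * δ ^ (-(2:ℝ)) * ((2*ε)^(d-1) * δ ^ (-(1:ℝ) * (d-1:ℕ)))
          = ((2*ε) * (2*ε)^(d-1)) * (δ ^ (-(2:ℝ)) * δ ^ (-(1:ℝ) * (d-1:ℕ))) := by ring
      rw [h4, ← Real.rpow_add hδ0, ← pow_succ']
      have h5 : d - 1 + 1 = d := by omega
      rw [h5]
      congr 1
      have h6 : ((d-1:ℕ):ℝ) = D - 1 := by
        rw [hD, Nat.cast_sub hd1]
        norm_num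
      rw [h6]
      ring
    have hvreq : vr = 2^(d-1) * δ^(D+1) := by
      rw [hvrdef]
      have h1 : (2*δ)^(d-1) = 2^(d-1) * δ^(d-1) := mul_pow 2 δ (d-1)
      rw [h1]
      have h2 : δ^2 * (2^(d-1) * δ^(d-1)) = 2^(d-1) * (δ^(2:ℕ) * δ^(d-1)) := by ring
      rw [h2, ← pow_add]
      congr 1
      rw [← Real.rpow_natCast δ (2 + (d-1))]
      congr 1
      rw [hD]
      push_cast [Nat.cast_sub hd1]
      ring
    have hWlow : ((1/2)*((ε/2)^α)*((2*ε)^d))^(2/q) * δ^((-(2*α+D+1)) * (2/q)) ≤ W := by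
      rw [hW]
      have h1 : ((1/2)*((ε/2)^α)*((2*ε)^d)) * δ^(-(2*α+D+1)) ≤ VXr * m := by
        have h2 : (2*ε)^d * δ^(-(D+1)) * ((1/2)*(ε/2)^α * δ^(-(2*α)))
            = ((1/2)*((ε/2)^α)*((2*ε)^d)) * (δ^(-(D+1)) * δ^(-(2*α))) := by ring
        have h3 : δ^(-(D+1)) * δ^(-(2*α)) = δ^(-(2*α+D+1)) := by
          rw [← Real.rpow_add hδ0]
          congr 1
          ring
        calc ((1/2)*((ε/2)^α)*((2*ε)^d)) * δ^(-(2*α+D+1))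
            = (2*ε)^d * δ^(-(D+1)) * ((1/2)*(ε/2)^α * δ^(-(2*α))) := by rw [h2, h3]
          _ ≤ (2*ε)^d * δ^(-(D+1)) * (m:ℝ) := by
              apply mul_le_mul_of_nonneg_left hml
              positivity
          _ = VXr * m := by rw [hVXreq]
      have hh : (δ^(-(2*α+D+1)))^(2/q) = δ^((-(2*α+D+1)) * (2/q)) :=
        (Real.rpow_mul hδ0.le _ _).symm
      calc ((1/2)*((ε/2)^α)*((2*ε)^d))^(2/q) * δ^((-(2*α+D+1)) * (2/q))
          = (((1/2)*((ε/2)^α)*((2*ε)^d)) * δ^(-(2*α+D+1)))^(2/q) := by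
            rw [← hh, ← Real.mul_rpow (by positivity) (by positivity)]
        _ ≤ (VXr * m)^(2/q) := by
            apply Real.rpow_le_rpow (by positivity) h1 hq2.le
    have hKfin : K * δ ^ ee ≤ W * vr := by
      rw [hKdef, hvreq]
      have h1 : ((1/2)*((ε/2)^α)*((2*ε)^d))^(2/q) * 2^(d-1) * δ ^ ee
          = (((1/2)*((ε/2)^α)*((2*ε)^d))^(2/q) * δ^((-(2*α+D+1)) * (2/q))) * (2^(d-1) * δ^(D+1)) := by
        have h2 : δ^((-(2*α+D+1)) * (2/q)) * δ^(D+1) = δ ^ ee := by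
          rw [← Real.rpow_add hδ0, heedef]
          congr 1
          ring
        calc ((1/2)*((ε/2)^α)*((2*ε)^d))^(2/q) * 2^(d-1) * δ ^ ee
            = ((1/2)*((ε/2)^α)*((2*ε)^d))^(2/q) * 2^(d-1) * (δ^((-(2*α+D+1)) * (2/q)) * δ^(D+1)) := by
              rw [h2]
          _ = _ := by ring
      rw [h1]
      apply mul_le_mul_of_nonneg_right hWlow
      positivity
    exact le_trans hKfin hfinal
  -- choose δ small enough and derive the contradiction
  set B : ℝ := 4*C' + 1 with hBdef
  have hB0 : 0 < B := by rw [hBdef]; linarith only [hC'0]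
  set δ5 : ℝ := (((ε/2)^α)/2)^(1/(2*α)) with hδ5
  have hδ50 : 0 < δ5 := by
    rw [hδ5]
    apply Real.rpow_pos_of_pos
    have h9 : (0:ℝ) < (ε/2)^α := Real.rpow_pos_of_pos (by linarith only [hε0]) _
    linarith only [h9]
  set δ0 : ℝ := (B/K)^(ee⁻¹) with hδ0def
  have hδ00 : 0 < δ0 := Real.rpow_pos_of_pos (by positivity) _
  set δ : ℝ := min (min ε (Real.sqrt (ε/2))) (min δ5 δ0) with hδdef
  have hδpos : 0 < δ := by
    rw [hδdef]
    apply lt_min (lt_min hε0 (Real.sqrt_pos.2 (by linarith only [hε0]))) (lt_min hδ50 hδ00)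
  have hδε : δ ≤ ε := le_trans (min_le_left _ _) (min_le_left _ _)
  have hδsq : δ^2 ≤ ε/2 := by
    have h1 : δ ≤ Real.sqrt (ε/2) := le_trans (min_le_left _ _) (min_le_right _ _)
    calc δ^2 ≤ (Real.sqrt (ε/2))^2 := pow_le_pow_left₀ hδpos.le h1 2
      _ = ε/2 := Real.sq_sqrt (by linarith only [hε0])
  have hδα : δ^(2*α) ≤ ((ε/2)^α)/2 := by
    have h1 : δ ≤ δ5 := le_trans (min_le_right _ _) (min_le_left _ _)
    calc δ^(2*α) ≤ δ5^(2*α) := Real.rpow_le_rpow hδpos.le h1 (by positivity)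
      _ = ((ε/2)^α)/2 := by
          rw [hδ5, ← Real.rpow_mul (by positivity)]
          have h2 : (1/(2*α)) * (2*α) = 1 := by
            field_simp
          rw [h2, Real.rpow_one]
  have h1 := main δ hδpos hδε hδsq hδα
  have h2 : B/K ≤ δ ^ ee := by
    have hle : δ ≤ δ0 := le_trans (min_le_right _ _) (min_le_right _ _)
    have h3 : δ0 ^ ee = B/K := by
      rw [hδ0def, ← Real.rpow_mul (by positivity), inv_mul_cancel₀ hee0.ne, Real.rpow_one]
    calc B/K = δ0 ^ ee := h3.symm
      _ ≤ δ ^ ee := Real.rpow_le_rpow_of_nonpos hδpos hle hee0.le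
  have h4 : B ≤ K * δ ^ ee := by
    rw [← mul_div_cancel₀ B hK0.ne']
    calc K * (B/K) ≤ K * δ ^ ee := by
          apply mul_le_mul_of_nonneg_left h2 hK0.le
      _ = K * δ ^ ee := rfl
  rw [hBdef] at h4
  linarith only [h1, h4]


end
end

section
/- Let 0 ≤ α ≤ 1. There exist constants c, C > 0 depending only on α such that for every integer j ≥ 1 there exists a 2^{−j}-separated set 𝓔 ⊂ [1,2] with c·2^{jα} ≤ #𝓔 ≤ C·2^{jα}, 𝒜_α(𝓔; 2^{−j}) ≤ C, and Ã_α(𝓔; 2^{−j}) ≤ C. -/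
open MeasureTheory Metric Set ENNReal

noncomputable section

/-!
The set consists of the points `1 + ∑ i ∈ T, 2⁻¹ ^ i`, where `T` ranges over the subsets of the
positions `i ≤ j` at which `⌈α i⌉` jumps; it has `2 ^ ⌈α j⌉` points, which are `2⁻ʲ`-separated by
uniqueness of binary expansions. An interval of length `L ∈ (2⁻ᴹ⁻¹, 2⁻ᴹ]` meets at most four of
the cylinders fixed by the digits up to `M`, and at scale `δ ≈ 2⁻ᵐ` the points of one cylinder are
covered by their `2 ^ (⌈α m⌉ - ⌈α M⌉) ≤ 2 (2ᴹ⁻ᵐ) ^ (-α)` truncations after digit `m`. Since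
`δ / L ≲ 2ᴹ⁻ᵐ`, this bounds `(δ / L) ^ α 𝒩(𝓔 ∩ I, δ)` uniformly in `j`, `δ` and `I`.
-/

namespace CantorAssouad

open Finset

def dyadicSum (T : Finset ℕ) : ℝ := ∑ i ∈ T, (2⁻¹ : ℝ) ^ i

lemma dyadicSum_nonneg (T : Finset ℕ) : 0 ≤ dyadicSum T :=
  sum_nonneg fun _ _ => by positivity

lemma dyadicSum_mono {T T' : Finset ℕ} (h : T ⊆ T') : dyadicSum T ≤ dyadicSum T' :=
  sum_le_sum_of_subset_of_nonneg h fun _ _ _ => by positivity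

lemma dyadicSum_Ioc {m n : ℕ} (h : m ≤ n) :
    dyadicSum (Ioc m n) = (2⁻¹ : ℝ) ^ m - (2⁻¹ : ℝ) ^ n := by
  induction n, h using Nat.le_induction with
  | base => simp [dyadicSum]
  | succ n hmn ih =>
    rw [dyadicSum, sum_Ioc_succ_top hmn, ← dyadicSum, ih, pow_succ]
    ring

lemma dyadicSum_le_of_subset_Ioc {T : Finset ℕ} {m n : ℕ} (hT : T ⊆ Ioc m n) (h : m ≤ n) :
    dyadicSum T ≤ (2⁻¹ : ℝ) ^ m - (2⁻¹ : ℝ) ^ n :=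
  dyadicSum_Ioc h ▸ dyadicSum_mono hT

lemma dyadicSum_lt_of_forall_lt {T : Finset ℕ} {m : ℕ} (hT : ∀ i ∈ T, m < i) :
    dyadicSum T < (2⁻¹ : ℝ) ^ m := by
  have hsub : T ⊆ Ioc m (m + T.sup id) := fun i hi =>
    mem_Ioc.2 ⟨hT i hi, (le_sup (f := id) hi).trans (Nat.le_add_left _ _)⟩
  have := dyadicSum_le_of_subset_Ioc hsub (Nat.le_add_right _ _)
  have : (0 : ℝ) < (2⁻¹ : ℝ) ^ (m + T.sup id) := by positivity
  linarith

lemma dyadicSum_filter_le_add_filter_lt (T : Finset ℕ) (m : ℕ) :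
    dyadicSum (T.filter (· ≤ m)) + dyadicSum (T.filter (m < ·)) = dyadicSum T := by
  simp only [dyadicSum, ← not_le]
  exact sum_filter_add_sum_filter_not T _ _

lemma dyadicSum_filter_lt_lt (T : Finset ℕ) (m : ℕ) :
    dyadicSum (T.filter (m < ·)) < (2⁻¹ : ℝ) ^ m :=
  dyadicSum_lt_of_forall_lt fun _ hi => (mem_filter.1 hi).2

/-- The digits of `T'` after `i₀` sum to at most `2⁻¹ ^ i₀ - 2⁻¹ ^ n`. -/
lemma pow_le_dyadicSum_sub {T T' : Finset ℕ} {i₀ n : ℕ} (hi₀ : i₀ ∈ T \ T')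
    (hmin : ∀ i ∈ T' \ T, i₀ ≤ i) (hT : ∀ i ∈ T, i ≤ n) (hT' : ∀ i ∈ T', i ≤ n) :
    (2⁻¹ : ℝ) ^ n ≤ dyadicSum T - dyadicSum T' := by
  have hsplit (S S' : Finset ℕ) : dyadicSum (S \ S') + dyadicSum (S ∩ S') = dyadicSum S := by
    rw [← sdiff_inter_self_left]; exact sum_sdiff inter_subset_left
  have hT₁ := hsplit T T'
  have hT₂ := hsplit T' T
  rw [Finset.inter_comm] at hT₂
  have hfirst : (2⁻¹ : ℝ) ^ i₀ ≤ dyadicSum (T \ T') :=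
    single_le_sum (fun _ _ => by positivity) hi₀
  have hafter : T' \ T ⊆ Ioc i₀ n := fun i hi => by
    obtain ⟨hiT', hiT⟩ := mem_sdiff.1 hi
    refine mem_Ioc.2 ⟨(hmin i hi).lt_of_ne ?_, hT' i hiT'⟩
    rintro rfl
    exact (mem_sdiff.1 hi₀).2 hiT'
  have := dyadicSum_le_of_subset_Ioc hafter (hT i₀ (mem_sdiff.1 hi₀).1)
  linarith

lemma pow_le_abs_dyadicSum_sub {T T' : Finset ℕ} {n : ℕ} (hT : ∀ i ∈ T, i ≤ n)
    (hT' : ∀ i ∈ T', i ≤ n) (hne : T ≠ T') :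
    (2⁻¹ : ℝ) ^ n ≤ |dyadicSum T - dyadicSum T'| := by
  have hD : (symmDiff T T').Nonempty := nonempty_iff_ne_empty.2 (symmDiff_eq_bot.not.2 hne)
  have hmin : ∀ i ∈ symmDiff T T', (symmDiff T T').min' hD ≤ i := fun i hi => min'_le _ _ hi
  rcases mem_symmDiff.1 (min'_mem _ hD) with h | h
  · refine (pow_le_dyadicSum_sub (mem_sdiff.2 h) (fun i hi => ?_) hT hT').trans (le_abs_self _)
    exact hmin i (mem_symmDiff.2 (Or.inr (mem_sdiff.1 hi)))
  · rw [abs_sub_comm]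
    refine (pow_le_dyadicSum_sub (mem_sdiff.2 h) (fun i hi => ?_) hT' hT).trans (le_abs_self _)
    exact hmin i (mem_symmDiff.2 (Or.inl (mem_sdiff.1 hi)))

lemma dyadicSum_injOn (n : ℕ) : Set.InjOn dyadicSum {T | ∀ i ∈ T, i ≤ n} := by
  intro T hT T' hT' h
  by_contra hne
  have := pow_le_abs_dyadicSum_sub hT hT' hne
  rw [h, sub_self, abs_zero] at this
  exact (pow_pos (by norm_num : (0 : ℝ) < 2⁻¹) n).not_ge this

lemma add_card_filter_ne_pred_Ioc {f : ℕ → ℕ} (hf : Monotone f) (hstep : ∀ n, f (n + 1) ≤ f n + 1)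
    {M K : ℕ} (h : M ≤ K) : f M + #((Finset.Ioc M K).filter fun i => f i ≠ f (i - 1)) = f K := by
  induction K, h using Nat.le_induction with
  | base => simp
  | succ K hMK ih =>
    have hK : K + 1 ∉ (Finset.Ioc M K).filter fun i => f i ≠ f (i - 1) := by simp
    rw [← Finset.insert_Ioc_right_eq_Ioc_add_one hMK, filter_insert, Nat.add_sub_cancel]
    have : f K ≤ f (K + 1) := hf K.le_succ
    have := hstep K
    split_ifs with hjump
    · rw [card_insert_of_notMem hK]; omega
    · omega

def ceilMul (α : ℝ) (n : ℕ) : ℕ := ⌈α * n⌉₊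

lemma ceilMul_monotone {α : ℝ} (hα0 : 0 ≤ α) : Monotone (ceilMul α) := fun _ _ h =>
  Nat.ceil_le_ceil (mul_le_mul_of_nonneg_left (Nat.cast_le.2 h) hα0)

lemma ceilMul_succ_le {α : ℝ} (hα0 : 0 ≤ α) (hα1 : α ≤ 1) (n : ℕ) :
    ceilMul α (n + 1) ≤ ceilMul α n + 1 := by
  rw [ceilMul, ceilMul, ← Nat.ceil_add_one (by positivity)]
  exact Nat.ceil_le_ceil (by push_cast; nlinarith)

def cantorDigits (α : ℝ) (n : ℕ) : Finset ℕ :=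
  (Finset.Ioc 0 n).filter fun i => ceilMul α i ≠ ceilMul α (i - 1)

lemma le_of_mem_cantorDigits {α : ℝ} {n i : ℕ} (hi : i ∈ cantorDigits α n) : i ≤ n :=
  (Finset.mem_Ioc.1 (mem_filter.1 hi).1).2

lemma ceilMul_add_card_cantorDigits_filter {α : ℝ} (hα0 : 0 ≤ α) (hα1 : α ≤ 1) {M K : ℕ}
    (h : M ≤ K) : ceilMul α M + #((cantorDigits α K).filter (M < ·)) = ceilMul α K := by
  have : (cantorDigits α K).filter (M < ·) = (Finset.Ioc M K).filter
      fun i => ceilMul α i ≠ ceilMul α (i - 1) := by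
    ext i; simp only [cantorDigits, mem_filter, Finset.mem_Ioc]; omega
  rw [this]
  exact add_card_filter_ne_pred_Ioc (ceilMul_monotone hα0) (ceilMul_succ_le hα0 hα1) h

lemma card_cantorDigits {α : ℝ} (hα0 : 0 ≤ α) (hα1 : α ≤ 1) (n : ℕ) :
    #(cantorDigits α n) = ceilMul α n := by
  simpa [ceilMul, cantorDigits] using
    add_card_filter_ne_pred_Ioc (ceilMul_monotone hα0) (ceilMul_succ_le hα0 hα1) (Nat.zero_le n)

def cantorSet (α : ℝ) (j : ℕ) : Finset ℝ :=
  (cantorDigits α j).powerset.image fun T => 1 + dyadicSum T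

lemma mem_cantorSet {α : ℝ} {j : ℕ} {x : ℝ} :
    x ∈ cantorSet α j ↔ ∃ T ⊆ cantorDigits α j, 1 + dyadicSum T = x := by
  simp [cantorSet]

lemma card_cantorSet {α : ℝ} (hα0 : 0 ≤ α) (hα1 : α ≤ 1) (j : ℕ) :
    #(cantorSet α j) = 2 ^ ceilMul α j := by
  rw [cantorSet, card_image_of_injOn, card_powerset, card_cantorDigits hα0 hα1]
  intro T hT T' hT' h
  exact dyadicSum_injOn j (fun i hi => le_of_mem_cantorDigits (mem_powerset.1 hT hi))
    (fun i hi => le_of_mem_cantorDigits (mem_powerset.1 hT' hi)) (add_left_cancel h)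

lemma cantorSet_subset_Icc (α : ℝ) (j : ℕ) : (cantorSet α j : Set ℝ) ⊆ Set.Icc 1 2 := by
  intro x hx
  obtain ⟨T, hT, rfl⟩ := mem_cantorSet.1 hx
  have := dyadicSum_le_of_subset_Ioc (hT.trans (filter_subset _ (Finset.Ioc 0 j)))
    (Nat.zero_le j)
  have : (0 : ℝ) ≤ 2⁻¹ ^ j := by positivity
  constructor <;> linarith [dyadicSum_nonneg T, pow_zero (2⁻¹ : ℝ)]

lemma pow_le_abs_sub_of_mem_cantorSet {α : ℝ} {j : ℕ} {s t : ℝ} (hs : s ∈ cantorSet α j)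
    (ht : t ∈ cantorSet α j) (hst : s ≠ t) : (2⁻¹ : ℝ) ^ j ≤ |s - t| := by
  obtain ⟨T, hT, rfl⟩ := mem_cantorSet.1 hs
  obtain ⟨T', hT', rfl⟩ := mem_cantorSet.1 ht
  rw [add_sub_add_left_eq_sub]
  exact pow_le_abs_dyadicSum_sub (fun i hi => le_of_mem_cantorDigits (hT hi))
    (fun i hi => le_of_mem_cantorDigits (hT' hi)) (by rintro rfl; exact hst rfl)

lemma card_le_of_separated_of_mem_Icc {ι : Type*} (s : Finset ι) (g : ι → ℝ) {d u : ℝ} {k : ℕ}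
    (hd : 0 < d) (hsep : ∀ x ∈ s, ∀ y ∈ s, x ≠ y → d ≤ |g x - g y|)
    (hmem : ∀ x ∈ s, g x ∈ Set.Icc u (u + k * d)) : #s ≤ k + 1 := by
  have hpos : ∀ x ∈ s, 0 ≤ (g x - u) / d := fun x hx =>
    div_nonneg (by linarith [(hmem x hx).1]) hd.le
  rw [← card_range (k + 1)]
  refine card_le_card_of_injOn (fun x => ⌊(g x - u) / d⌋₊) (fun x hx => ?_) fun x hx y hy hxy => ?_
  · refine mem_range.2 (Nat.lt_succ_of_le (Nat.floor_le_of_le ?_))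
    rw [div_le_iff₀ hd]
    linarith [(hmem x hx).2]
  · by_contra hne
    have hfloor : |(g x - u) / d - (g y - u) / d| < 1 := by
      have := Nat.floor_le (hpos x hx)
      have := Nat.lt_floor_add_one ((g x - u) / d)
      have := Nat.floor_le (hpos y hy)
      have := Nat.lt_floor_add_one ((g y - u) / d)
      have : (⌊(g x - u) / d⌋₊ : ℝ) = ⌊(g y - u) / d⌋₊ := congrArg Nat.cast hxy
      rw [abs_sub_lt_iff]; constructor <;> linarith
    rw [← sub_div, sub_sub_sub_cancel_right, abs_div, abs_of_pos hd, div_lt_one hd] at hfloor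
    exact (hsep x hx y hy hne).not_gt hfloor

lemma covN_le_card_of_subset_biUnion_Ico {E : Set ℝ} {S : Finset ℝ} {h δ : ℝ} (hhδ : h < δ)
    (hE : E ⊆ ⋃ c ∈ S, Set.Ico c (c + h)) : covN E δ ≤ #S := by
  have hcover : E ⊆ ⋃ c ∈ S.image (· - (δ - h)), Set.Ioo c (c + δ) := fun x hx => by
    obtain ⟨c, hc, hxc⟩ := Set.mem_iUnion₂.1 (hE hx)
    refine Set.mem_iUnion₂.2 ⟨c - (δ - h), mem_image_of_mem _ hc, ?_⟩
    constructor <;> linarith [hxc.1, hxc.2]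
  exact (Nat.sInf_le ⟨_, rfl, hcover⟩ : covN E δ ≤ _).trans card_image_le

/-- A dyadic sum is determined by its digits up to `M`, whose sums are `2⁻¹ ^ M`-separated, and its
digits after `M`, which move it by less than `2⁻¹ ^ M`. -/
lemma card_filter_dyadicSum_mem_Icc_le (S : Finset ℕ) (M : ℕ) {u v : ℝ}
    (huv : v ≤ u + 2 * (2⁻¹ : ℝ) ^ M) :
    #(S.powerset.filter fun U => dyadicSum U ∈ Set.Icc u v) ≤ 4 * 2 ^ #(S.filter (M < ·)) := by
  set d : ℝ := 2⁻¹ ^ M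
  set heads := (S.filter (· ≤ M)).powerset.filter fun P => dyadicSum P ∈ Set.Icc (u - d) v
  have hheads : #heads ≤ 4 := by
    refine card_le_of_separated_of_mem_Icc heads dyadicSum (d := d) (u := u - d) (k := 3)
      (by positivity) (fun P hP P' hP' hne => ?_) fun P hP => ?_
    · have hle (Q) (hQ : Q ∈ heads) : ∀ i ∈ Q, i ≤ M := fun i hi =>
        (mem_filter.1 (mem_powerset.1 (mem_filter.1 hQ).1 hi)).2
      exact pow_le_abs_dyadicSum_sub (hle P hP) (hle P' hP') hne
    · have := (mem_filter.1 hP).2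
      exact ⟨this.1, by push_cast; linarith [this.2]⟩
  calc #(S.powerset.filter fun U => dyadicSum U ∈ Set.Icc u v)
      ≤ #(heads ×ˢ (S.filter (M < ·)).powerset) := by
        refine card_le_card_of_injOn (fun U => (U.filter (· ≤ M), U.filter (M < ·)))
          (fun U hU => ?_) fun U _ U' _ h => ?_
        · obtain ⟨hUS, hUuv⟩ := mem_filter.1 hU
          have hsplit := dyadicSum_filter_le_add_filter_lt U M
          have : dyadicSum (U.filter (M < ·)) < d := dyadicSum_filter_lt_lt U M
          have := dyadicSum_nonneg (U.filter (M < ·))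
          refine mem_product.2 ⟨mem_filter.2 ⟨?_, ?_, ?_⟩, ?_⟩ <;> dsimp only
          · exact mem_powerset.2 (filter_subset_filter _ (mem_powerset.1 hUS))
          · linarith [(Set.mem_Icc.1 hUuv).1]
          · linarith [(Set.mem_Icc.1 hUuv).2]
          · exact mem_powerset.2 (filter_subset_filter _ (mem_powerset.1 hUS))
        · obtain ⟨hle, hlt⟩ := Prod.ext_iff.1 h
          ext i
          by_cases hi : i ≤ M
          · simpa [hi] using congrArg (i ∈ ·) hle
          · simpa [lt_of_not_ge hi] using congrArg (i ∈ ·) hlt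
    _ ≤ 4 * 2 ^ #(S.filter (M < ·)) := by
        rw [card_product, card_powerset]
        exact Nat.mul_le_mul_right _ hheads

lemma covN_cantorSet_inter_Icc_le (α : ℝ) (j : ℕ) {m : ℕ} {a b δ : ℝ} (hδ : (2⁻¹ : ℝ) ^ m < δ) :
    covN (↑(cantorSet α j) ∩ Set.Icc a b) δ ≤
      #((cantorDigits α m).powerset.filter
        fun U => dyadicSum U ∈ Set.Icc (a - 1 - (2⁻¹ : ℝ) ^ m) (b - 1)) := by
  refine (covN_le_card_of_subset_biUnion_Ico (S := Finset.image (fun U => 1 + dyadicSum U) _) hδ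
    fun x hx => ?_).trans card_image_le
  obtain ⟨⟨T, hT, rfl⟩, hxab⟩ := And.imp_left mem_cantorSet.1 hx
  have hsplit := dyadicSum_filter_le_add_filter_lt T m
  have := dyadicSum_filter_lt_lt T m
  have := dyadicSum_nonneg (T.filter (m < ·))
  refine Set.mem_iUnion₂.2 ⟨1 + dyadicSum (T.filter (· ≤ m)), mem_image_of_mem _ ?_, ?_, ?_⟩
  · refine mem_filter.2 ⟨mem_powerset.2 fun i hi => ?_, ?_, ?_⟩
    · obtain ⟨hiT, him⟩ := mem_filter.1 hi
      obtain ⟨hij, hjump⟩ := mem_filter.1 (hT hiT)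
      exact mem_filter.2 ⟨Finset.mem_Ioc.2 ⟨(Finset.mem_Ioc.1 hij).1, him⟩, hjump⟩
    · linarith [hxab.1]
    · linarith [hxab.2]
  · linarith
  · linarith

lemma rpow_mul_two_pow_le {α x : ℝ} {c k : ℕ} (hα0 : 0 ≤ α) (hα1 : α ≤ 1) (hx0 : 0 ≤ x)
    (hx : x ≤ 4 * (2⁻¹ : ℝ) ^ k) (hc : (c : ℝ) ≤ α * k + 1) : x ^ α * 2 ^ c ≤ 8 := by
  have h2k : (2⁻¹ : ℝ) ^ k = 2 ^ (-(k : ℝ)) := by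
    rw [Real.rpow_neg zero_le_two, Real.rpow_natCast, inv_pow]
  have h4 : (4 : ℝ) ^ α ≤ 4 := by
    simpa using Real.rpow_le_rpow_of_exponent_le (by norm_num : (1 : ℝ) ≤ 4) hα1
  calc x ^ α * 2 ^ c ≤ (4 * 2 ^ (-(k : ℝ))) ^ α * 2 ^ (α * k + 1) := by
        rw [← Real.rpow_natCast 2 c]
        gcongr
        · rw [← h2k]; exact hx
        · exact one_le_two
    _ = 4 ^ α * 2 := by
        rw [Real.mul_rpow (by norm_num) (by positivity), ← Real.rpow_mul zero_le_two, mul_assoc,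
          ← Real.rpow_add two_pos]
        ring_nf
        simp
    _ ≤ 8 := by linarith

lemma rpow_mul_covN_cantorSet_le {α : ℝ} (hα0 : 0 ≤ α) (hα1 : α ≤ 1) (j : ℕ) {a b δ : ℝ}
    (hδ : 0 < δ) (ha : 1 ≤ a) (hb : b ≤ 2) (hab : δ ≤ b - a) :
    (δ / (b - a)) ^ α * covN (↑(cantorSet α j) ∩ Set.Icc a b) δ ≤ 32 := by
  have hhalf : (0 : ℝ) < 2⁻¹ ∧ (2⁻¹ : ℝ) < 1 := by norm_num
  have hL : 0 < b - a := hδ.trans_le hab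
  obtain ⟨M, hM, hM'⟩ := exists_nat_pow_near_of_lt_one hL (by linarith) hhalf.1 hhalf.2
  obtain ⟨m, hm, hm'⟩ : ∃ m : ℕ, (2⁻¹ : ℝ) ^ m < δ ∧ δ ≤ 2 * 2⁻¹ ^ m := by
    obtain ⟨n, hn, hn'⟩ := exists_nat_pow_near_of_lt_one hδ (by linarith) hhalf.1 hhalf.2
    exact ⟨n + 1, hn, by rw [pow_succ]; linarith⟩
  obtain ⟨k, rfl⟩ : ∃ k, m = M + k := Nat.exists_eq_add_of_le <| le_of_lt <|
    (pow_lt_pow_iff_right_of_lt_one₀ hhalf.1 hhalf.2).1 (by linarith)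
  set c := #((cantorDigits α (M + k)).filter (M < ·))
  have hcover : covN (↑(cantorSet α j) ∩ Set.Icc a b) δ ≤ 4 * 2 ^ c :=
    (covN_cantorSet_inter_Icc_le α j hm).trans <|
      card_filter_dyadicSum_mem_Icc_le _ M (by linarith)
  have hc : (c : ℝ) ≤ α * k + 1 := by
    have hdigits : (ceilMul α M : ℝ) + c = ceilMul α (M + k) := by
      exact_mod_cast ceilMul_add_card_cantorDigits_filter hα0 hα1 (Nat.le_add_right M k)
    have : α * M ≤ ceilMul α M := Nat.le_ceil _
    have : (ceilMul α (M + k) : ℝ) < α * (M + k : ℕ) + 1 :=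
      Nat.ceil_lt_add_one (mul_nonneg hα0 (Nat.cast_nonneg _))
    push_cast at this
    linarith
  have hratio : δ / (b - a) ≤ 4 * 2⁻¹ ^ k := by
    rw [div_le_iff₀ hL]
    rw [pow_add] at hm'
    rw [pow_succ] at hM
    nlinarith [pow_pos hhalf.1 M, pow_pos hhalf.1 k]
  have hratio0 : 0 ≤ δ / (b - a) := div_nonneg hδ.le hL.le
  calc (δ / (b - a)) ^ α * covN (↑(cantorSet α j) ∩ Set.Icc a b) δ
      ≤ (δ / (b - a)) ^ α * (4 * 2 ^ c) :=
        mul_le_mul_of_nonneg_left (by exact_mod_cast hcover) (Real.rpow_nonneg hratio0 α)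
    _ = 4 * ((δ / (b - a)) ^ α * 2 ^ c) := by ring
    _ ≤ 32 := by linarith [rpow_mul_two_pow_le hα0 hα1 hratio0 hratio hc]

lemma assouadChar_cantorSet_le {α : ℝ} (hα0 : 0 ≤ α) (hα1 : α ≤ 1) (j : ℕ) {δ : ℝ}
    (hδ : 0 < δ) : assouadChar α (cantorSet α j) δ ≤ 32 := by
  refine Real.sSup_le ?_ (by norm_num)
  rintro r ⟨a, b, ha, hb, hab, rfl⟩
  exact rpow_mul_covN_cantorSet_le hα0 hα1 j hδ ha hb hab

end CantorAssouad

open CantorAssouad in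
/-- existence of Cantor-type `2^{-j}`-separated sets with bounded
Assouad characteristics (Lemma 4.1). -/
theorem stmt16 (α : ℝ) (hα0 : 0 ≤ α) (hα1 : α ≤ 1) :
    ∃ c C : ℝ, 0 < c ∧ 0 < C ∧
      ∀ j : ℕ, 1 ≤ j →
        ∃ 𝓔 : Finset ℝ, (𝓔 : Set ℝ) ⊆ Set.Icc 1 2 ∧
          (∀ s ∈ 𝓔, ∀ t ∈ 𝓔, s ≠ t → (2 : ℝ) ^ (-(j : ℝ)) ≤ |s - t|) ∧
          c * 2 ^ ((j : ℝ) * α) ≤ (𝓔.card : ℝ) ∧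
          (𝓔.card : ℝ) ≤ C * 2 ^ ((j : ℝ) * α) ∧
          assouadChar α (𝓔 : Set ℝ) ((2 : ℝ) ^ (-(j : ℝ))) ≤ C ∧
          ∀ δ' : ℝ, (2 : ℝ) ^ (-(j : ℝ)) ≤ δ' → δ' < 1 →
            assouadChar α (𝓔 : Set ℝ) δ' ≤ C := by
  refine ⟨1, 32, one_pos, by norm_num, fun j _ => ?_⟩
  have hδ : (2 : ℝ) ^ (-(j : ℝ)) = 2⁻¹ ^ j := by
    rw [Real.rpow_neg zero_le_two, Real.rpow_natCast, inv_pow]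
  have hδ0 : (0 : ℝ) < 2 ^ (-(j : ℝ)) := by positivity
  have hcard : ((cantorSet α j).card : ℝ) = 2 ^ (ceilMul α j : ℝ) := by
    rw [card_cantorSet hα0 hα1, Real.rpow_natCast]; push_cast; rfl
  have hceil : (j : ℝ) * α ≤ ceilMul α j := mul_comm α j ▸ Nat.le_ceil _
  have hceil' : (ceilMul α j : ℝ) ≤ j * α + 1 :=
    mul_comm α j ▸ (Nat.ceil_lt_add_one (by positivity)).le
  refine ⟨cantorSet α j, cantorSet_subset_Icc α j,
    fun s hs t ht hst => hδ ▸ pow_le_abs_sub_of_mem_cantorSet hs ht hst, ?_, ?_,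
    assouadChar_cantorSet_le hα0 hα1 j hδ0,
    fun δ' hδ' _ => assouadChar_cantorSet_le hα0 hα1 j (hδ0.trans_le hδ')⟩
  · rw [one_mul, hcard]
    exact Real.rpow_le_rpow_of_exponent_le one_le_two hceil
  · calc ((cantorSet α j).card : ℝ) ≤ 2 ^ ((j : ℝ) * α + 1) :=
          hcard ▸ Real.rpow_le_rpow_of_exponent_le one_le_two hceil'
      _ ≤ 32 * 2 ^ ((j : ℝ) * α) := by
          rw [Real.rpow_add_one two_ne_zero]
          linarith [Real.rpow_pos_of_pos two_pos ((j : ℝ) * α)]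

end
end
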